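/- arXiv:1906.09598 — 5 statements merged into one kernel-verified Lean document; each statement's English description precedes it below -/
import Mathlib

section
/- For every k ≥ 4, every k-critical graph G satisfies C(f_{k-1}(G), k-2) ≥ |E(G)|, where f_{k-1}(G) is the number of distinct (k-1)-critical subgraphs of G and C(·,·) denotes the binomial coefficient. -/
open SimpleGraph

/-- `t(G) = |E(G)| - |V(G)| + 1`. -/
noncomputable def tOf {V : Type*} (G : SimpleGraph V) : ℤ :=
  (G.edgeSet.ncard : ℤ) - ((Set.univ : Set V).ncard : ℤ) + 1

/-- `t` of a subgraph. -/
noncomputable def tSub {V : Type*} {G : SimpleGraph V} (B : G.Subgraph) : ℤ :=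
  (B.edgeSet.ncard : ℤ) - (B.verts.ncard : ℤ) + 1

/-- A graph is `k`-connected: more than `k` vertices and removing fewer than `k`
vertices leaves a connected graph. -/
def IsKConnected {V : Type*} (k : ℕ) (G : SimpleGraph V) : Prop :=
  k < (Set.univ : Set V).ncard ∧
    ∀ S : Set V, S.ncard < k → (((⊤ : G.Subgraph).deleteVerts S)).coe.Connected

/-- `G` contains an odd cycle. -/
def HasOddCycle {V : Type*} (G : SimpleGraph V) : Prop :=
  ∃ (v : V) (w : G.Walk v v), w.IsCycle ∧ Odd w.length

/-- The number of odd cycles of `G`, counted as subgraphs (by their edge sets). -/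
noncomputable def oddCycleCount {V : Type*} (G : SimpleGraph V) : ℕ :=
  {s : Set (Sym2 V) | Odd s.ncard ∧
    ∃ (v : V) (w : G.Walk v v), w.IsCycle ∧ s = {e | e ∈ w.edges}}.ncard

/-- The number of even cycles of `G`, counted as subgraphs (by their edge sets). -/
noncomputable def evenCycleCount {V : Type*} (G : SimpleGraph V) : ℕ :=
  {s : Set (Sym2 V) | Even s.ncard ∧
    ∃ (v : V) (w : G.Walk v v), w.IsCycle ∧ s = {e | e ∈ w.edges}}.ncard

/-- The number of `(x,y)`-paths of `G`, counted by their edge sets. -/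
noncomputable def pathCount {V : Type*} (G : SimpleGraph V) (x y : V) : ℕ :=
  {s : Set (Sym2 V) | ∃ w : G.Walk x y, w.IsPath ∧ s = {e | e ∈ w.edges}}.ncard

/-- A graph is `k`-critical if its chromatic number is `k` and every proper
subgraph has chromatic number less than `k`. -/
def IsCritical {V : Type*} (G : SimpleGraph V) (k : ℕ) : Prop :=
  G.chromaticNumber = (k : ℕ∞) ∧
    ∀ H : G.Subgraph, H ≠ ⊤ → H.coe.chromaticNumber < (k : ℕ∞)

/-- `f_s(G)`: the number of `s`-critical subgraphs of `G`. -/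
noncomputable def critCount {V : Type*} (G : SimpleGraph V) (s : ℕ) : ℕ :=
  {H : G.Subgraph | IsCritical H.coe s}.ncard

/-- A subgraph is 2-connected-like: connected with no cut vertex of itself. -/
def NoCutVertexSub {V : Type*} {G : SimpleGraph V} (B : G.Subgraph) : Prop :=
  B.coe.Connected ∧
    ∀ v : V, (B.deleteVerts {v}).verts.Nonempty → (B.deleteVerts {v}).coe.Connected

/-- A block of `G`: a maximal connected subgraph without a cut vertex of itself. -/
def IsBlock {V : Type*} (G : SimpleGraph V) (B : G.Subgraph) : Prop :=
  NoCutVertexSub B ∧ ∀ B' : G.Subgraph, B ≤ B' → NoCutVertexSub B' → B' = B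

/-- A cut vertex of `G`: its deletion disconnects `G`. -/
def IsCutVertex {V : Type*} (G : SimpleGraph V) (v : V) : Prop :=
  ¬ (((⊤ : G.Subgraph).deleteVerts {v})).coe.Connected

/-- An end-block: a block containing at most one cut vertex of `G`. -/
def IsEndBlock {V : Type*} (G : SimpleGraph V) (B : G.Subgraph) : Prop :=
  IsBlock G B ∧ {v ∈ B.verts | IsCutVertex G v}.ncard ≤ 1

/-- The set of edges of `G` with one endpoint in `S` and one outside `S`. -/
def crossEdges {V : Type*} (G : SimpleGraph V) (S : Set V) : Set (Sym2 V) :=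
  {e | ∃ u v, e = s(u, v) ∧ G.Adj u v ∧ u ∈ S ∧ v ∉ S}

/-- The number of edges of `G` between `S` and its complement. -/
noncomputable def crossCount {V : Type*} (G : SimpleGraph V) (S : Set V) : ℕ :=
  (crossEdges G S).ncard

/-- The number of even-length `(x,y)`-paths, counted by edge sets. -/
noncomputable def evenPathCount {V : Type*} (G : SimpleGraph V) (x y : V) : ℕ :=
  {s : Set (Sym2 V) | ∃ w : G.Walk x y, w.IsPath ∧ Even w.length ∧
    s = {e | e ∈ w.edges}}.ncard

/-- The number of odd-length `(x,y)`-paths, counted by edge sets. -/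
noncomputable def oddPathCount {V : Type*} (G : SimpleGraph V) (x y : V) : ℕ :=
  {s : Set (Sym2 V) | ∃ w : G.Walk x y, w.IsPath ∧ Odd w.length ∧
    s = {e | e ∈ w.edges}}.ncard

section AbbottHareAux

variable {V : Type*} {G : SimpleGraph V}

private lemma subgraph_finite [Finite V] : Finite G.Subgraph :=
  Finite.of_injective (fun H : G.Subgraph => (H.verts, H.Adj)) (by
    intro H1 H2 h
    rw [Prod.mk.injEq] at h
    exact SimpleGraph.Subgraph.ext h.1 h.2)

private lemma colorable_succ_of_deleteEdge {C : G.Subgraph} {n : ℕ} (x y : V)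
    (hcol : (C.deleteEdges {s(x, y)}).coe.Colorable n) : C.coe.Colorable (n + 1) := by
  classical
  obtain ⟨c⟩ := hcol
  refine ⟨Coloring.mk (fun v => if (v : V) = x then Fin.last n else
    (c ⟨(v : V), by simpa using v.2⟩).castSucc) ?_⟩
  intro v w hadj
  have hvw : C.Adj (v : V) (w : V) := hadj
  have hne : (v : V) ≠ (w : V) := (C.adj_sub hvw).ne
  by_cases h1 : (v : V) = x <;> by_cases h2 : (w : V) = x
  · exact absurd (h1.trans h2.symm) hne
  · simp only [h1, if_pos, if_neg h2]
    exact (Fin.castSucc_lt_last _).ne'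
  · simp only [if_neg h1, h2, if_pos]
    exact (Fin.castSucc_lt_last _).ne
  · simp only [if_neg h1, if_neg h2]
    intro hcc
    have hmem : s((v : V), (w : V)) ∉ ({s(x, y)} : Set (Sym2 V)) := by
      simp only [Set.mem_singleton_iff, Sym2.eq_iff]
      rintro (⟨rfl, rfl⟩ | ⟨rfl, rfl⟩)
      · exact h1 rfl
      · exact h2 rfl
    have hD : (C.deleteEdges {s(x, y)}).coe.Adj
        ⟨(v : V), by simpa using v.2⟩ ⟨(w : V), by simpa using w.2⟩ := by
      show (C.deleteEdges {s(x, y)}).Adj (v : V) (w : V)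
      rw [SimpleGraph.Subgraph.deleteEdges_adj]
      exact ⟨hvw, hmem⟩
    exact c.valid hD (Fin.castSucc_inj.mp hcc)

private lemma colorable_of_chromLT {W : Type*} {H : SimpleGraph W} {n : ℕ}
    (h : H.chromaticNumber < ((n + 1 : ℕ) : ℕ∞)) : H.Colorable n := by
  rw [← chromaticNumber_le_iff_colorable]
  have h2 : ((n + 1 : ℕ) : ℕ∞) = ((n : ℕ) : ℕ∞) + 1 := by push_cast; rfl
  rw [h2, ENat.lt_add_one_iff (ENat.coe_ne_top n)] at h
  exact h

private lemma chromLT_of_colorable {W : Type*} {H : SimpleGraph W} {n : ℕ}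
    (h : H.Colorable n) : H.chromaticNumber < ((n + 1 : ℕ) : ℕ∞) :=
  lt_of_le_of_lt h.chromaticNumber_le (by exact_mod_cast Nat.lt_succ_self n)

private lemma chromEq_of_colorable_not {W : Type*} {H : SimpleGraph W} {n : ℕ}
    (h1 : H.Colorable (n + 1)) (h2 : ¬ H.Colorable n) :
    H.chromaticNumber = ((n + 1 : ℕ) : ℕ∞) := by
  refine le_antisymm h1.chromaticNumber_le ?_
  by_contra hlt
  push_neg at hlt
  exact h2 (colorable_of_chromLT hlt)

private lemma exists_critical [Finite V] {n : ℕ} (K : G.Subgraph)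
    (hK : ¬ K.coe.Colorable (n + 1)) :
    ∃ C : G.Subgraph, C ≤ K ∧ IsCritical C.coe (n + 2) := by
  classical
  have : Finite G.Subgraph := subgraph_finite
  have : Fintype G.Subgraph := Fintype.ofFinite _
  let s : Finset G.Subgraph :=
    Finset.univ.filter (fun C => C ≤ K ∧ ¬ C.coe.Colorable (n + 1))
  have hKs : K ∈ s := by simp [s, hK]
  obtain ⟨C, hCs, hmin⟩ := s.exists_minimal ⟨K, hKs⟩
  simp only [s, Finset.mem_filter, Finset.mem_univ, true_and] at hCs
  obtain ⟨hCK, hCnc⟩ := hCs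
  have hminlt : ∀ D : G.Subgraph, D < C → D.coe.Colorable (n + 1) := by
    intro D hD
    by_contra hDnc
    exact absurd (hmin (show D ∈ s by simp [s, le_trans hD.le hCK, hDnc]) hD.le) (not_le_of_gt hD)
  have hedge : ∃ x y, C.Adj x y := by
    by_contra h
    push_neg at h
    exact hCnc ⟨Coloring.mk (fun _ => (0 : Fin (n + 1)))
      (fun {v w} hadj => absurd (show C.Adj v w from hadj) (h _ _))⟩
  obtain ⟨x, y, hxy⟩ := hedge
  have hdel : C.deleteEdges {s(x, y)} < C := by
    refine lt_of_le_of_ne (SimpleGraph.Subgraph.deleteEdges_le _) ?_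
    intro h
    have h2 := hxy
    rw [← h, SimpleGraph.Subgraph.deleteEdges_adj] at h2
    simp at h2
  have hc2 : C.coe.Colorable (n + 2) := colorable_succ_of_deleteEdge x y (hminlt _ hdel)
  refine ⟨C, hCK, chromEq_of_colorable_not hc2 hCnc, ?_⟩
  intro H hH
  have hDC : (SimpleGraph.Subgraph.coeSubgraph H) ≤ C := SimpleGraph.Subgraph.coeSubgraph_le H
  have htop : SimpleGraph.Subgraph.coeSubgraph (⊤ : C.coe.Subgraph) = C := by
    refine SimpleGraph.Subgraph.ext ?_ ?_
    · exact Subtype.coe_image_univ _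
    · ext v w
      rw [SimpleGraph.Subgraph.coeSubgraph_adj]
      constructor
      · rintro ⟨hv, hw, h⟩
        exact h
      · intro h
        exact ⟨C.edge_vert h, C.edge_vert h.symm, h⟩
  have hDne : (SimpleGraph.Subgraph.coeSubgraph H) ≠ C := fun h =>
    hH (SimpleGraph.Subgraph.coeSubgraph_injective C (h.trans htop.symm))
  obtain ⟨c⟩ := hminlt _ (lt_of_le_of_ne hDC hDne)
  have hcolH : H.coe.Colorable (n + 1) := by
    refine ⟨Coloring.mk
      (fun v => c ⟨v.1.1, Set.mem_image_of_mem _ v.2⟩) ?_⟩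
    intro v w hadj
    refine c.valid (show (SimpleGraph.Subgraph.coeSubgraph H).coe.Adj _ _ from ?_)
    show (SimpleGraph.Subgraph.coeSubgraph H).Adj v.1.1 w.1.1
    rw [SimpleGraph.Subgraph.coeSubgraph_adj]
    exact ⟨v.1.2, w.1.2, hadj⟩
  exact chromLT_of_colorable hcolH

private lemma card_subtype_ne {m : ℕ} (j : Fin (m + 3)) :
    Fintype.card {a : Fin (m + 3) // a ≠ j} = m + 2 := by simp

private lemma card_subtype_pair {m : ℕ} {j j' : Fin (m + 3)} (h : j ≠ j') :
    Fintype.card {a : Fin (m + 3) // a ∉ ({j, j'} : Finset (Fin (m + 3)))} = m + 1 := by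
  classical
  rw [Fintype.card_subtype_compl]
  have h2 : Fintype.card {x : Fin (m + 3) // x = j ∨ x = j'} = 2 := by
    rw [Fintype.card_subtype_or_disjoint _ _ (by
      simp only [Pi.disjoint_iff, Prop.disjoint_iff]
      rintro a ⟨rfl, rfl⟩
      exact h rfl)]
    simp [Fintype.card_subtype_eq]
  simp only [Finset.mem_insert, Finset.mem_singleton]
  rw [h2, Fintype.card_fin]
  omega

private lemma edge_family [Fintype V] {m : ℕ}
    (hχ : G.chromaticNumber = ((m + 4 : ℕ) : ℕ∞))
    (hsub : ∀ H : G.Subgraph, H ≠ ⊤ → H.coe.chromaticNumber < ((m + 4 : ℕ) : ℕ∞))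
    {x y : V} (hadj : G.Adj x y) :
    ∃ S : Finset G.Subgraph, S.card = m + 2 ∧
      (∀ C ∈ S, IsCritical C.coe (m + 3)) ∧
      (∀ C ∈ S, C.Adj x y) ∧
      (∀ u v : V, G.Adj u v → (∀ C ∈ S, C.Adj u v) → s(u, v) = s(x, y)) := by
  classical
  set H0 : G.Subgraph := (⊤ : G.Subgraph).deleteEdges {s(x, y)} with hH0
  have hH0ne : H0 ≠ ⊤ := by
    intro h
    have h2 : (⊤ : G.Subgraph).Adj x y := by simpa using hadj
    rw [← h, hH0, SimpleGraph.Subgraph.deleteEdges_adj] at h2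
    simp at h2
  have hnotcol : ¬ G.Colorable (m + 3) := by
    intro hcol
    have h3 := hcol.chromaticNumber_le
    rw [hχ] at h3
    exact absurd (Nat.cast_le.mp h3) (by omega)
  obtain ⟨φ, hφ⟩ : ∃ φ : V → Fin (m + 3),
      ∀ u v, G.Adj u v → s(u, v) ≠ s(x, y) → φ u ≠ φ v := by
    obtain ⟨c0⟩ : H0.coe.Colorable (m + 3) := colorable_of_chromLT (hsub H0 hH0ne)
    refine ⟨fun v => c0 ⟨v, by simp [hH0]⟩, ?_⟩
    intro u v huv hne'
    exact c0.valid (v := ⟨u, by simp [hH0]⟩) (w := ⟨v, by simp [hH0]⟩) (by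
      show H0.Adj u v
      rw [hH0, SimpleGraph.Subgraph.deleteEdges_adj]
      exact ⟨by simpa using huv, by simpa using hne'⟩)
  have hφxy : φ x = φ y := by
    by_contra hnexy
    refine hnotcol ⟨Coloring.mk φ ?_⟩
    intro u v huv
    by_cases he : s(u, v) = s(x, y)
    · rw [Sym2.eq_iff] at he
      rcases he with ⟨rfl, rfl⟩ | ⟨rfl, rfl⟩
      · exact hnexy
      · exact fun h2 => hnexy h2.symm
    · exact hφ u v huv he
  have key : ∀ j : Fin (m + 3), ∃ C : G.Subgraph, j ≠ φ x →
      (IsCritical C.coe (m + 3) ∧ C.Adj x y ∧ ∀ v ∈ C.verts, φ v ≠ j) := by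
    intro j
    by_cases hj : j = φ x
    · exact ⟨⊤, fun h2 => absurd hj h2⟩
    set K : G.Subgraph := (⊤ : G.Subgraph).induce {v | φ v ≠ j} with hK
    have hKnc : ¬ K.coe.Colorable (m + 2) := by
      rintro ⟨ψ⟩
      refine hnotcol ⟨Coloring.mk (fun v => if h : φ v = j then Fin.last (m + 2)
        else (ψ ⟨v, h⟩).castSucc) ?_⟩
      intro u v huv
      by_cases h1 : φ u = j <;> by_cases h2 : φ v = j
      · exfalso
        by_cases he : s(u, v) = s(x, y)
        · rw [Sym2.eq_iff] at he
          rcases he with ⟨rfl, rfl⟩ | ⟨rfl, rfl⟩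
          · exact hj h1.symm
          · exact hj (hφxy.trans h1).symm
        · exact hφ u v huv he (h1.trans h2.symm)
      · simp only [dif_pos h1, dif_neg h2]
        exact (Fin.castSucc_lt_last _).ne'
      · simp only [dif_neg h1, dif_pos h2]
        exact (Fin.castSucc_lt_last _).ne
      · simp only [dif_neg h1, dif_neg h2]
        intro hcc
        refine ψ.valid (v := ⟨u, h1⟩) (w := ⟨v, h2⟩) ?_ (Fin.castSucc_inj.mp hcc)
        show K.Adj u v
        rw [hK]
        exact ⟨h1, h2, by simpa using huv⟩
    obtain ⟨C, hCK, hCcrit⟩ := exists_critical (n := m + 1) K hKnc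
    have hCverts : ∀ v ∈ C.verts, φ v ≠ j := fun v hv => hCK.1 hv
    refine ⟨C, fun _ => ⟨hCcrit, ?_, hCverts⟩⟩
    by_contra hnxy
    have hco : C.coe.Coloring {a : Fin (m + 3) // a ≠ j} := by
      refine Coloring.mk (fun v => ⟨φ v.1, hCverts v.1 v.2⟩) ?_
      intro v w hvw
      have hCad : C.Adj v.1 w.1 := hvw
      have hGad : G.Adj v.1 w.1 := C.adj_sub hCad
      have hnexy2 : s(v.1, w.1) ≠ s(x, y) := by
        intro h2
        rw [Sym2.eq_iff] at h2
        rcases h2 with ⟨ha, hb⟩ | ⟨ha, hb⟩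
        · exact hnxy (ha ▸ hb ▸ hCad)
        · exact hnxy (ha ▸ hb ▸ hCad.symm)
      intro hcc
      exact hφ _ _ hGad hnexy2 (congrArg Subtype.val hcc)
    have hcol : C.coe.Colorable (m + 2) := by
      have h4 := hco.colorable
      rwa [card_subtype_ne j] at h4
    have h5 := hcol.chromaticNumber_le
    rw [hCcrit.1] at h5
    exact absurd (Nat.cast_le.mp h5) (by omega)
  choose Cf hCf using key
  have hinj : ∀ j ∈ Finset.univ.erase (φ x), ∀ j' ∈ Finset.univ.erase (φ x),
      Cf j = Cf j' → j = j' := by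
    intro j hj j' hj' hEq
    rw [Finset.mem_erase] at hj hj'
    by_contra hjj'
    obtain ⟨hcrit, hCxy, hCv⟩ := hCf j hj.1
    obtain ⟨_, _, hCv'⟩ := hCf j' hj'.1
    rw [← hEq] at hCv'
    have hdcol : ((Cf j).deleteEdges {s(x, y)}).coe.Coloring
        {a : Fin (m + 3) // a ∉ ({j, j'} : Finset (Fin (m + 3)))} := by
      refine Coloring.mk (fun v => ⟨φ v.1, ?_⟩) ?_
      · have hv : (v : V) ∈ (Cf j).verts := by simpa using v.2
        simp only [Finset.mem_insert, Finset.mem_singleton]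
        push_neg
        exact ⟨hCv _ hv, hCv' _ hv⟩
      · intro v w hvw
        have hDad : ((Cf j).deleteEdges {s(x, y)}).Adj v.1 w.1 := hvw
        rw [SimpleGraph.Subgraph.deleteEdges_adj] at hDad
        obtain ⟨hCad, hmem⟩ := hDad
        intro hcc
        exact hφ _ _ ((Cf j).adj_sub hCad) (by simpa using hmem)
          (congrArg Subtype.val hcc)
    have hcol1 : ((Cf j).deleteEdges {s(x, y)}).coe.Colorable (m + 1) := by
      have h4 := hdcol.colorable
      rwa [card_subtype_pair hjj'] at h4
    have hcol2 : (Cf j).coe.Colorable (m + 2) := colorable_succ_of_deleteEdge x y hcol1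
    have h5 := hcol2.chromaticNumber_le
    rw [hcrit.1] at h5
    exact absurd (Nat.cast_le.mp h5) (by omega)
  refine ⟨(Finset.univ.erase (φ x)).image Cf, ?_, ?_, ?_, ?_⟩
  · rw [Finset.card_image_of_injOn hinj, Finset.card_erase_of_mem (Finset.mem_univ _)]
    simp
  · intro C hC
    obtain ⟨j, hj, rfl⟩ := Finset.mem_image.mp hC
    exact (hCf j (Finset.mem_erase.mp hj).1).1
  · intro C hC
    obtain ⟨j, hj, rfl⟩ := Finset.mem_image.mp hC
    exact (hCf j (Finset.mem_erase.mp hj).1).2.1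
  · intro u v huv hall
    by_contra hnexy2
    have hφu : φ u = φ x := by
      by_contra h2
      have hmem : φ u ∈ Finset.univ.erase (φ x) := by simp [h2]
      exact (hCf (φ u) h2).2.2 u
        ((Cf (φ u)).edge_vert (hall _ (Finset.mem_image_of_mem Cf hmem))) rfl
    have hφv : φ v = φ x := by
      by_contra h2
      have hmem : φ v ∈ Finset.univ.erase (φ x) := by simp [h2]
      exact (hCf (φ v) h2).2.2 v
        ((Cf (φ v)).edge_vert (hall _ (Finset.mem_image_of_mem Cf hmem)).symm) rfl
    exact hφ u v huv hnexy2 (hφu.trans hφv.symm)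

end AbbottHareAux


/-- For `k ≥ 4`, every `k`-critical graph `G` satisfies
`C(f_{k-1}(G), k-2) ≥ |E(G)|`. -/
theorem choose_critCount_ge_edges {V : Type*} [Fintype V] (G : SimpleGraph V)
    (k : ℕ) (hk : 4 ≤ k) (hG : IsCritical G k) :
    G.edgeSet.ncard ≤ Nat.choose (critCount G (k - 1)) (k - 2) := by
  classical
  obtain ⟨m, rfl⟩ : ∃ m, k = m + 4 := ⟨k - 4, by omega⟩
  obtain ⟨hχ, hsub⟩ := hG
  have h1 : m + 4 - 1 = m + 3 := rfl
  have h2 : m + 4 - 2 = m + 2 := rfl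
  rw [h1, h2]
  have : Finite G.Subgraph := subgraph_finite
  have : Fintype G.Subgraph := Fintype.ofFinite _
  set critF : Finset G.Subgraph :=
    Finset.univ.filter (fun H => IsCritical H.coe (m + 3)) with hcritF
  have hcount : critCount G (m + 3) = critF.card := by
    rw [critCount, ← Set.ncard_coe_finset]
    congr 1
    ext H
    simp [hcritF]
  rw [hcount]
  have hex : ∀ e ∈ G.edgeSet, ∃ S : Finset G.Subgraph,
      S ∈ critF.powersetCard (m + 2) ∧ (∀ C ∈ S, e ∈ C.edgeSet) ∧
      (∀ f ∈ G.edgeSet, (∀ C ∈ S, f ∈ C.edgeSet) → f = e) := by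
    intro e he
    induction e using Sym2.ind with
    | _ x y =>
      rw [SimpleGraph.mem_edgeSet] at he
      obtain ⟨S, hcard, hcrit, hxy, huniq⟩ := edge_family hχ hsub he
      refine ⟨S, ?_, ?_, ?_⟩
      · rw [Finset.mem_powersetCard]
        exact ⟨fun C hC => by simp [hcritF, hcrit C hC], hcard⟩
      · intro C hC
        exact hxy C hC
      · intro f hf hfall
        induction f using Sym2.ind with
        | _ u v =>
          rw [SimpleGraph.mem_edgeSet] at hf
          exact huniq u v hf (fun C hC => hfall C hC)
  choose! F hF1 hF2 hF3 using hex
  have hedge : G.edgeSet.ncard = G.edgeFinset.card := by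
    rw [Set.ncard_eq_toFinset_card', Set.toFinset_card]
    convert G.edgeFinset_card.symm
  rw [hedge, ← Finset.card_powersetCard]
  refine Finset.card_le_card_of_injOn F ?_ ?_
  · intro e he
    exact hF1 e (by simpa using he)
  · intro e he e' he' hEq
    refine (hF3 e (by simpa using he) e' (by simpa using he') ?_).symm
    intro C hC
    exact hF2 e' (by simpa using he') C (hEq ▸ hC)
end

section
/- For every k ≥ 4, every k-critical graph G on n vertices contains at least ((k-1)! · n / 2)^{1/(k-2)} distinct (k-1)-critical subgraphs. -/
open SimpleGraph

section Helpers

variable {V : Type*}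

theorem colorable_of_hom {α β : Type*} {A : SimpleGraph α} {B : SimpleGraph β}
    (f : A →g B) {n : ℕ} (h : B.Colorable n) : A.Colorable n :=
  ⟨h.some.comp f⟩

theorem not_colorable_of_chromaticNumber_eq {α : Type*} {A : SimpleGraph α} {n m : ℕ}
    (h : A.chromaticNumber = (n : ℕ∞)) (hm : m < n) : ¬ A.Colorable m := by
  intro hc
  have h1 := hc.chromaticNumber_le
  rw [h, Nat.cast_le] at h1
  omega

theorem colorable_of_chromaticNumber_lt {α : Type*} [Finite α] {A : SimpleGraph α} {m : ℕ}
    (h : A.chromaticNumber < ((m + 1 : ℕ) : ℕ∞)) : A.Colorable m := by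
  have h1 := A.colorable_chromaticNumber_of_fintype
  refine h1.mono ?_
  have hne : A.chromaticNumber ≠ ⊤ := by
    intro ht
    rw [ht] at h
    exact (not_top_lt h)
  obtain ⟨c, hc⟩ := Option.ne_none_iff_exists'.mp hne
  rw [hc] at h ⊢
  have hcm : c < m + 1 := by
    rw [show ((m + 1 : ℕ) : ℕ∞) = some (m + 1) from rfl] at h
    exact WithTop.coe_lt_coe.mp h
  have : ENat.toNat (some c) = c := rfl
  omega

theorem colorable_succ_of_deleteEdges {α : Type*} {A : SimpleGraph α} {u v : α} (huv : A.Adj u v)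
    {n : ℕ} (h : (A.deleteEdges {s(u, v)}).Colorable n) : A.Colorable (n + 1) := by
  classical
  obtain ⟨C⟩ := h
  refine ⟨SimpleGraph.Coloring.mk (fun w => if w = u then Fin.last n else (C w).castSucc) ?_⟩
  intro a b hab heq
  by_cases ha : a = u <;> by_cases hb : b = u
  · simp only [ha, hb] at hab
    exact A.loopless.irrefl u hab
  · rw [if_pos ha, if_neg hb] at heq
    exact (Fin.castSucc_lt_last (C b)).ne' heq
  · rw [if_neg ha, if_pos hb] at heq
    exact (Fin.castSucc_lt_last (C a)).ne heq
  · rw [if_neg ha, if_neg hb] at heq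
    have hadj : (A.deleteEdges {s(u, v)}).Adj a b := by
      rw [SimpleGraph.deleteEdges_adj]
      refine ⟨hab, ?_⟩
      rw [Set.mem_singleton_iff, Sym2.eq_iff]
      rintro (⟨rfl, rfl⟩ | ⟨rfl, rfl⟩)
      · exact ha rfl
      · exact hb rfl
    exact C.valid hadj (Fin.castSucc_injective n heq)

end Helpers

section Crit

variable {V : Type*}

/-- The subgraph of `G` determined by a simple graph `A ≤ G`, on the support of `A`. -/
def toSub (G A : SimpleGraph V) (h : A ≤ G) : G.Subgraph where
  verts := A.support
  Adj := A.Adj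
  adj_sub := fun hab => h hab
  edge_vert := fun hab => ⟨_, hab⟩
  symm := A.symm

theorem coe_colorable_of {G : SimpleGraph V} {H : G.Subgraph} {A : SimpleGraph V}
    (hsub : ∀ a b, H.Adj a b → A.Adj a b) {n : ℕ} (h : A.Colorable n) : H.coe.Colorable n :=
  colorable_of_hom ⟨Subtype.val, fun {x y} hxy => hsub _ _ hxy⟩ h

theorem colorable_of_toSub {G A : SimpleGraph V} (hle : A ≤ G) {n : ℕ} (hn : 0 < n)
    (h : (toSub G A hle).coe.Colorable n) : A.Colorable n := by
  classical
  obtain ⟨C⟩ := h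
  refine ⟨SimpleGraph.Coloring.mk
    (fun w => if hw : w ∈ A.support then C ⟨w, hw⟩ else ⟨0, hn⟩) ?_⟩
  intro a b hab heq
  have ha : a ∈ A.support := ⟨b, hab⟩
  have hb : b ∈ A.support := ⟨a, hab.symm⟩
  rw [dif_pos ha, dif_pos hb] at heq
  exact C.valid (show (toSub G A hle).coe.Adj ⟨a, ha⟩ ⟨b, hb⟩ from hab) heq

theorem exists_minimal_noncolorable [Finite V] {G₀ : SimpleGraph V} {n : ℕ}
    (h : ¬ G₀.Colorable n) :
    ∃ A, A ≤ G₀ ∧ ¬ A.Colorable n ∧ ∀ L, L < A → L.Colorable n := by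
  classical
  have hfin : Finite (SimpleGraph V) :=
    Finite.of_injective (fun A : SimpleGraph V => A.Adj)
      (fun A B hAB => SimpleGraph.ext hAB)
  have hwf : WellFounded ((· < ·) : SimpleGraph V → SimpleGraph V → Prop) :=
    (Finite.to_wellFoundedLT).wf
  obtain ⟨A, ⟨hA1, hA2⟩, hmin⟩ :=
    hwf.has_min {A | A ≤ G₀ ∧ ¬ A.Colorable n} ⟨G₀, le_refl _, h⟩
  exact ⟨A, hA1, hA2, fun L hL =>
    not_not.mp fun hc => hmin L ⟨hL.le.trans hA1, hc⟩ hL⟩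

theorem exists_critical_s4 [Finite V] {G G₀ : SimpleGraph V} (hle : G₀ ≤ G) (t : ℕ)
    (h : ¬ G₀.Colorable (t + 1)) :
    ∃ H : G.Subgraph, IsCritical H.coe (t + 2) ∧ (∀ a b, H.Adj a b → G₀.Adj a b) ∧
      ∀ v ∈ H.verts, ∃ w, H.Adj v w := by
  classical
  obtain ⟨A, hA0, hA, hminA⟩ := exists_minimal_noncolorable h
  have hAG : A ≤ G := hA0.trans hle
  have hedge : ∃ x y, A.Adj x y := by
    by_contra hno
    push_neg at hno
    exact hA ⟨SimpleGraph.Coloring.mk (fun _ => ⟨0, by omega⟩)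
      (fun {a b} hab => absurd hab (hno a b))⟩
  obtain ⟨u, v, huv⟩ := hedge
  have hcolA : A.Colorable (t + 2) := by
    have hdel : (A.deleteEdges {s(u, v)}).Colorable (t + 1) := by
      apply hminA
      refine lt_of_le_of_ne (SimpleGraph.deleteEdges_le _) ?_
      intro hEq
      have h2 : (A.deleteEdges {s(u, v)}).Adj u v := by rw [hEq]; exact huv
      rw [SimpleGraph.deleteEdges_adj] at h2
      exact h2.2 rfl
    exact colorable_succ_of_deleteEdges huv hdel
  refine ⟨toSub G A hAG, ⟨?_, ?_⟩, fun a b hab => hA0 hab, fun w hw => hw⟩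
  · -- chromatic number is t+2
    have hcol : (toSub G A hAG).coe.Colorable (t + 2) :=
      coe_colorable_of (fun a b hab => hab) hcolA
    have hncol : ¬ (toSub G A hAG).coe.Colorable (t + 1) := fun hc =>
      hA (colorable_of_toSub hAG (by omega) hc)
    refine le_antisymm hcol.chromaticNumber_le ?_
    by_contra hlt
    push_neg at hlt
    exact hncol (colorable_of_chromaticNumber_lt hlt)
  · -- all proper subgraphs have smaller chromatic number
    intro K hK
    have hmiss : ∃ a b : A.support, (toSub G A hAG).coe.Adj a b ∧ ¬ K.Adj a b := by
      by_contra hno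
      push_neg at hno
      apply hK
      have hverts : K.verts = Set.univ := by
        apply Set.eq_univ_of_forall
        intro x
        obtain ⟨w, hw⟩ := x.2
        have hadjc : (toSub G A hAG).coe.Adj x ⟨w, ⟨x.1, hw.symm⟩⟩ := hw
        exact K.edge_vert (hno _ _ hadjc)
      ext x y
      · simp [hverts]
      · simp only [SimpleGraph.Subgraph.top_adj]
        exact ⟨fun hxy => K.adj_sub hxy, fun hxy => hno _ _ hxy⟩
    obtain ⟨a, b, hab, hnK⟩ := hmiss
    have hAab : A.Adj a.1 b.1 := hab
    have hLlt : A.deleteEdges {s(a.1, b.1)} < A := by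
      refine lt_of_le_of_ne (SimpleGraph.deleteEdges_le _) ?_
      intro hEq
      have h2 : (A.deleteEdges {s(a.1, b.1)}).Adj a.1 b.1 := by rw [hEq]; exact hAab
      rw [SimpleGraph.deleteEdges_adj] at h2
      exact h2.2 rfl
    have hLcol : (A.deleteEdges {s(a.1, b.1)}).Colorable (t + 1) := hminA _ hLlt
    have hKcol : K.coe.Colorable (t + 1) := by
      refine colorable_of_hom ⟨fun x => x.1.1, ?_⟩ hLcol
      intro x y hxy
      have hKxy : K.Adj x.1 y.1 := hxy
      have hAxy : A.Adj x.1.1 y.1.1 := K.adj_sub hKxy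
      rw [SimpleGraph.deleteEdges_adj]
      refine ⟨hAxy, ?_⟩
      rw [Set.mem_singleton_iff, Sym2.eq_iff]
      rintro (⟨h1, h2⟩ | ⟨h1, h2⟩)
      · have hx : x.1 = a := Subtype.ext h1
        have hy : y.1 = b := Subtype.ext h2
        rw [hx, hy] at hKxy
        exact hnK hKxy
      · have hx : x.1 = b := Subtype.ext h1
        have hy : y.1 = a := Subtype.ext h2
        rw [hx, hy] at hKxy
        exact hnK (hKxy.symm)
    calc K.coe.chromaticNumber ≤ ((t + 1 : ℕ) : ℕ∞) := hKcol.chromaticNumber_le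
      _ < ((t + 2 : ℕ) : ℕ∞) := by
          rw [Nat.cast_lt]
          omega

end Crit

section Core

variable {V : Type*}

theorem degree_ge [Fintype V] {G : SimpleGraph V} [DecidableRel G.Adj] {r : ℕ}
    (hG : IsCritical G (r + 1)) (v : V) : r ≤ G.degree v := by
  classical
  by_contra hlt
  push_neg at hlt
  have hr : 0 < r := Nat.pos_of_ne_zero (by rintro rfl; omega)
  have hne : ((⊤ : G.Subgraph).deleteVerts {v}) ≠ ⊤ := by
    intro hEq
    have hv : v ∈ ((⊤ : G.Subgraph).deleteVerts {v}).verts := by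
      rw [hEq, SimpleGraph.Subgraph.verts_top]
      trivial
    rw [SimpleGraph.Subgraph.deleteVerts_verts] at hv
    exact hv.2 rfl
  have hcol : ((⊤ : G.Subgraph).deleteVerts {v}).coe.Colorable r := by
    have h2 := hG.2 _ hne
    exact colorable_of_chromaticNumber_lt h2
  obtain ⟨C⟩ := hcol
  have hmem : ∀ w : V, w ≠ v → w ∈ ((⊤ : G.Subgraph).deleteVerts {v}).verts := by
    intro w hw
    rw [SimpleGraph.Subgraph.deleteVerts_verts, SimpleGraph.Subgraph.verts_top]
    exact ⟨trivial, hw⟩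
  set g : ∀ w : V, w ≠ v → Fin r := fun w hw => C ⟨w, hmem w hw⟩ with hg
  -- the set of colors used by neighbors of v
  set S : Finset (Fin r) := (G.neighborFinset v).attach.image
    (fun w => g w.1 (G.ne_of_adj (by
      have := w.2
      rw [SimpleGraph.mem_neighborFinset] at this
      exact this.symm))) with hS
  have hScard : S.card < r := by
    calc S.card ≤ (G.neighborFinset v).attach.card := Finset.card_image_le
      _ = G.degree v := by rw [Finset.card_attach, SimpleGraph.card_neighborFinset_eq_degree]
      _ < r := hlt
  have hfresh : ∃ j : Fin r, j ∉ S := by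
    by_contra hall
    push_neg at hall
    have : (Finset.univ : Finset (Fin r)) ⊆ S := fun j _ => hall j
    have := Finset.card_le_card this
    rw [Finset.card_univ, Fintype.card_fin] at this
    omega
  obtain ⟨j, hj⟩ := hfresh
  have hGcol : G.Colorable r := by
    refine ⟨SimpleGraph.Coloring.mk (fun w => if hw : w = v then j else g w hw) ?_⟩
    intro a b hab heq
    by_cases ha : a = v <;> by_cases hb : b = v
    · rw [ha, hb] at hab; exact G.loopless.irrefl v hab
    · rw [dif_pos ha, dif_neg hb] at heq
      apply hj
      rw [hS]
      apply Finset.mem_image.mpr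
      have hbmem : b ∈ G.neighborFinset v := by
        rw [SimpleGraph.mem_neighborFinset]
        rw [ha] at hab
        exact hab
      exact ⟨⟨b, hbmem⟩, Finset.mem_attach _ _, heq.symm⟩
    · rw [dif_neg ha, dif_pos hb] at heq
      apply hj
      rw [hS]
      apply Finset.mem_image.mpr
      have hamem : a ∈ G.neighborFinset v := by
        rw [SimpleGraph.mem_neighborFinset]
        rw [hb] at hab
        exact hab.symm
      exact ⟨⟨a, hamem⟩, Finset.mem_attach _ _, heq⟩
    · rw [dif_neg ha, dif_neg hb] at heq
      have hadj : ((⊤ : G.Subgraph).deleteVerts {v}).coe.Adj ⟨a, hmem a ha⟩ ⟨b, hmem b hb⟩ := by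
        simp [SimpleGraph.Subgraph.deleteVerts_adj, ha, hb, hab]
      exact C.valid hadj heq
  exact not_colorable_of_chromaticNumber_eq hG.1 (by omega) hGcol

end Core

section Package

variable {V : Type*}

theorem edge_package [Fintype V] {G : SimpleGraph V} {r : ℕ} (hG : IsCritical G (r + 4))
    {u v : V} (huv : G.Adj u v) :
    ∃ c : (G.deleteEdges {s(u, v)}).Coloring (Fin (r + 3)), c u = c v ∧
      ∀ j : Fin (r + 3), j ≠ c u →
        ∃ H : G.Subgraph, IsCritical H.coe (r + 3) ∧ (∀ w ∈ H.verts, ∃ z, H.Adj w z) ∧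
          H.Adj u v ∧ ∀ a b, H.Adj a b → c a ≠ j ∧ c b ≠ j := by
  classical
  have hnotk1 : ¬ G.Colorable (r + 3) := not_colorable_of_chromaticNumber_eq hG.1 (by omega)
  -- a coloring of G minus the edge e = s(u,v)
  have hecol : (G.deleteEdges {s(u, v)}).Colorable (r + 3) := by
    set He : G.Subgraph :=
      { verts := Set.univ
        Adj := (G.deleteEdges {s(u, v)}).Adj
        adj_sub := fun hab => (SimpleGraph.deleteEdges_le _ hab)
        edge_vert := fun _ => trivial
        symm := (G.deleteEdges {s(u, v)}).symm } with hHe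
    have hne : He ≠ ⊤ := by
      intro hEq
      have h2 : He.Adj u v := by rw [hEq]; exact huv
      exact absurd (h2 : (G.deleteEdges {s(u, v)}).Adj u v) (by simp [hHe])
    have hcol : He.coe.Colorable (r + 3) := colorable_of_chromaticNumber_lt (hG.2 He hne)
    refine colorable_of_hom ?_ hcol
    exact { toFun := fun w => ⟨w, trivial⟩, map_rel' := fun {a b} hab => hab }
  obtain ⟨c⟩ := hecol
  have hcuv : c u = c v := by
    by_contra hne
    apply hnotk1
    refine ⟨SimpleGraph.Coloring.mk (fun w => c w) ?_⟩
    intro a b hab heq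
    by_cases he : s(a, b) = s(u, v)
    · rw [Sym2.eq_iff] at he
      rcases he with ⟨rfl, rfl⟩ | ⟨rfl, rfl⟩
      · exact hne heq
      · exact hne heq.symm
    · exact c.valid (by rw [SimpleGraph.deleteEdges_adj]; exact ⟨hab, by simpa using he⟩) heq
  refine ⟨c, hcuv, ?_⟩
  intro j hj
  -- the spanning graph avoiding color class j
  set Gj : SimpleGraph V :=
    { Adj := fun a b => G.Adj a b ∧ c a ≠ j ∧ c b ≠ j
      symm := ⟨fun a b h => ⟨h.1.symm, h.2.2, h.2.1⟩⟩
      loopless := ⟨fun a h => G.loopless.irrefl a h.1⟩ } with hGj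
  have hGjle : Gj ≤ G := fun {a b} hab => hab.1
  have hGjncol : ¬ Gj.Colorable (r + 2) := by
    rintro ⟨d⟩
    apply hnotk1
    refine ⟨SimpleGraph.Coloring.mk
      (fun w => if c w = j then Fin.last (r + 2) else (d w).castSucc) ?_⟩
    intro a b hab heq
    by_cases ha : c a = j <;> by_cases hb : c b = j
    · -- both endpoints in class j: impossible
      by_cases he : s(a, b) = s(u, v)
      · rw [Sym2.eq_iff] at he
        rcases he with ⟨rfl, rfl⟩ | ⟨rfl, rfl⟩
        · exact hj ha.symm
        · exact hj hb.symm
      · have : c a ≠ c b :=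
          c.valid (by rw [SimpleGraph.deleteEdges_adj]; exact ⟨hab, by simpa using he⟩)
        exact this (ha.trans hb.symm)
    · rw [if_pos ha, if_neg hb] at heq
      exact (Fin.castSucc_lt_last (d b)).ne' heq
    · rw [if_neg ha, if_pos hb] at heq
      exact (Fin.castSucc_lt_last (d a)).ne heq
    · rw [if_neg ha, if_neg hb] at heq
      have hGjadj : Gj.Adj a b := ⟨hab, ha, hb⟩
      exact d.valid hGjadj (Fin.castSucc_injective _ heq)
  obtain ⟨H, hHcrit, hHsub, hHsupp⟩ := exists_critical_s4 hGjle (r + 1) hGjncol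
  refine ⟨H, hHcrit, hHsupp, ?_, fun a b hab => ⟨(hHsub a b hab).2.1, (hHsub a b hab).2.2⟩⟩
  -- H must contain the edge s(u,v)
  by_contra hnuv
  have hKcol : H.coe.Colorable (r + 2) := by
    have hcd : ∀ x : H.verts, c x.1 ≠ j := by
      intro x
      obtain ⟨w, hw⟩ := hHsupp x.1 x.2
      exact (hHsub _ _ hw).2.1
    have hcol2 : H.coe.Coloring {i : Fin (r + 3) // i ≠ j} := by
      refine SimpleGraph.Coloring.mk (fun x => ⟨c x.1, hcd x⟩) ?_
      intro x y hxy heq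
      have hHxy : H.Adj x.1 y.1 := hxy
      have hGxy : G.Adj x.1 y.1 := H.adj_sub hHxy
      have he : s(x.1, y.1) ≠ s(u, v) := by
        intro hcontra
        rw [Sym2.eq_iff] at hcontra
        rcases hcontra with ⟨h1, h2⟩ | ⟨h1, h2⟩
        · rw [h1, h2] at hHxy
          exact hnuv hHxy
        · rw [h1, h2] at hHxy
          exact hnuv (hHxy.symm)
      have := c.valid
        (by rw [SimpleGraph.deleteEdges_adj]; exact ⟨hGxy, by simpa using he⟩)
      exact this (congrArg Subtype.val heq)
    have hcard : Fintype.card {i : Fin (r + 3) // i ≠ j} = r + 2 := by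
      have h1 : Fintype.card {i : Fin (r + 3) // ¬ i = j} =
          Fintype.card (Fin (r + 3)) - Fintype.card {i : Fin (r + 3) // i = j} :=
        Fintype.card_subtype_compl _
      have h2 : Fintype.card {i : Fin (r + 3) // i = j} = 1 := Fintype.card_subtype_eq j
      simpa [h2] using h1
    have := hcol2.colorable
    rwa [hcard] at this
  exact not_colorable_of_chromaticNumber_eq hHcrit.1 (by omega) hKcol

theorem distinct_js [Fintype V] {G : SimpleGraph V} {r : ℕ} {u v : V}
    (c : (G.deleteEdges {s(u, v)}).Coloring (Fin (r + 3))) {j j' : Fin (r + 3)} (hjj' : j ≠ j')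
    {H : G.Subgraph} (hcrit : IsCritical H.coe (r + 3)) (He : H.Adj u v)
    (hsupp : ∀ w ∈ H.verts, ∃ z, H.Adj w z)
    (hav : ∀ a b, H.Adj a b → c a ≠ j ∧ c b ≠ j)
    (hav' : ∀ a b, H.Adj a b → c a ≠ j' ∧ c b ≠ j') : False := by
  classical
  have hu : u ∈ H.verts := H.edge_vert He
  have hv : v ∈ H.verts := H.edge_vert He.symm
  have huv' : H.coe.Adj ⟨u, hu⟩ ⟨v, hv⟩ := He
  have hcardT : Fintype.card {i : Fin (r + 3) // i ≠ j ∧ i ≠ j'} = r + 1 := by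
    have h1 : Fintype.card {i : Fin (r + 3) // ¬ (i = j ∨ i = j')} =
        Fintype.card (Fin (r + 3)) - Fintype.card {i : Fin (r + 3) // i = j ∨ i = j'} :=
      Fintype.card_subtype_compl _
    have h2 : Fintype.card {i : Fin (r + 3) // i = j ∨ i = j'} = 2 := by
      rw [Fintype.card_subtype]
      have hset : (Finset.univ.filter fun i : Fin (r + 3) => i = j ∨ i = j') = {j, j'} := by
        ext i
        simp [Finset.mem_insert]
      rw [hset, Finset.card_pair hjj']
    have h3 : Fintype.card {i : Fin (r + 3) // i ≠ j ∧ i ≠ j'} =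
        Fintype.card {i : Fin (r + 3) // ¬ (i = j ∨ i = j')} := by
      apply Fintype.card_congr
      apply Equiv.subtypeEquivRight
      intro i
      tauto
    rw [h3, h1, h2]
    simp
  have hc2 : ∀ x : H.verts, c x.1 ≠ j ∧ c x.1 ≠ j' := by
    intro x
    obtain ⟨w, hw⟩ := hsupp x.1 x.2
    exact ⟨(hav _ _ hw).1, (hav' _ _ hw).1⟩
  have hdel : (H.coe.deleteEdges {s((⟨u, hu⟩ : H.verts), ⟨v, hv⟩)}).Colorable (r + 1) := by
    have hcol2 : (H.coe.deleteEdges {s((⟨u, hu⟩ : H.verts), ⟨v, hv⟩)}).Coloring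
        {i : Fin (r + 3) // i ≠ j ∧ i ≠ j'} := by
      refine SimpleGraph.Coloring.mk (fun x => ⟨c x.1, hc2 x⟩) ?_
      intro x y hxy heq
      rw [SimpleGraph.deleteEdges_adj] at hxy
      obtain ⟨hxy1, hxy2⟩ := hxy
      have hHxy : H.Adj x.1 y.1 := hxy1
      have he : s(x.1, y.1) ≠ s(u, v) := by
        intro hcontra
        rw [Sym2.eq_iff] at hcontra
        apply hxy2
        rw [Set.mem_singleton_iff, Sym2.eq_iff]
        rcases hcontra with ⟨h1, h2⟩ | ⟨h1, h2⟩
        · exact Or.inl ⟨Subtype.ext h1, Subtype.ext h2⟩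
        · exact Or.inr ⟨Subtype.ext h1, Subtype.ext h2⟩
      have hval := c.valid
        (by rw [SimpleGraph.deleteEdges_adj]; exact ⟨H.adj_sub hHxy, by simpa using he⟩)
      exact hval (congrArg Subtype.val heq)
    have hcc := hcol2.colorable
    rwa [hcardT] at hcc
  have hKcol : H.coe.Colorable (r + 2) := colorable_succ_of_deleteEdges huv' hdel
  exact not_colorable_of_chromaticNumber_eq hcrit.1 (by omega) hKcol

theorem common_edge {G : SimpleGraph V} {r : ℕ} {u v : V}
    (c : (G.deleteEdges {s(u, v)}).Coloring (Fin (r + 3))) (hcuv : c u = c v)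
    {a b : V} (hab : G.Adj a b)
    (ha : ∀ j : Fin (r + 3), j ≠ c u → c a ≠ j ∧ c b ≠ j) :
    s(a, b) = s(u, v) := by
  have hca : c a = c u := by
    by_contra h
    exact (ha (c a) h).1 rfl
  have hcb : c b = c u := by
    by_contra h
    exact (ha (c b) h).2 rfl
  by_contra hne
  exact c.valid (by rw [SimpleGraph.deleteEdges_adj]; exact ⟨hab, by simpa using hne⟩)
    (hca.trans hcb.symm)

end Package

/-- For `k ≥ 4`, every `k`-critical graph on `n` vertices contains at
least `((k-1)! · n / 2)^{1/(k-2)}` distinct `(k-1)`-critical subgraphs. -/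
theorem critCount_lower_bound {V : Type*} [Fintype V] (G : SimpleGraph V)
    (k : ℕ) (hk : 4 ≤ k) (hG : IsCritical G k) :
    ((Nat.factorial (k - 1) : ℝ) * (Fintype.card V : ℝ) / 2) ^ ((1 : ℝ) / ((k : ℝ) - 2))
      ≤ (critCount G (k - 1) : ℝ) := by
  classical
  obtain ⟨r, rfl⟩ : ∃ r, k = r + 4 := ⟨k - 4, by omega⟩
  have hk1 : r + 4 - 1 = r + 3 := rfl
  rw [hk1]
  set CS := {H : G.Subgraph | IsCritical H.coe (r + 3)} with hCSdef
  haveI hfinSub : Finite G.Subgraph :=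
    Finite.of_injective (fun H : G.Subgraph => (H.verts, H.Adj))
      (fun A B h => SimpleGraph.Subgraph.ext (congrArg Prod.fst h) (congrArg Prod.snd h))
  have hcc : critCount G (r + 3) = Nat.card ↥CS := by
    unfold critCount
    exact (Nat.card_coe_set_eq _).symm
  -- minimum degree and edge count
  have hdeg : ∀ w : V, r + 3 ≤ G.degree w := fun w => degree_ge (r := r + 3) hG w
  have hhs : Fintype.card V * (r + 3) ≤ 2 * G.edgeFinset.card := by
    calc Fintype.card V * (r + 3) = ∑ _w : V, (r + 3) := by
          rw [Finset.sum_const, Finset.card_univ, smul_eq_mul]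
      _ ≤ ∑ w : V, G.degree w := Finset.sum_le_sum fun w _ => hdeg w
      _ = 2 * G.edgeFinset.card := G.sum_degrees_eq_twice_card_edges
  have hmcard : G.edgeSet.ncard = G.edgeFinset.card := by
    rw [Set.ncard_eq_toFinset_card']
    congr 1
  -- per-edge packages
  have pkg : ∀ e : G.edgeSet, ∃ p : V × V, G.Adj p.1 p.2 ∧ (e : Sym2 V) = s(p.1, p.2) ∧
      ∃ c : (G.deleteEdges {s(p.1, p.2)}).Coloring (Fin (r + 3)), c p.1 = c p.2 ∧
        ∀ j : Fin (r + 3), j ≠ c p.1 →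
          ∃ H : G.Subgraph, (IsCritical H.coe (r + 3) ∧ (∀ w ∈ H.verts, ∃ z, H.Adj w z)) ∧
            H.Adj p.1 p.2 ∧ ∀ a b, H.Adj a b → c a ≠ j ∧ c b ≠ j := by
    rintro ⟨e, he⟩
    induction e using Sym2.ind with
    | _ x y =>
      rw [SimpleGraph.mem_edgeSet] at he
      obtain ⟨c, hc1, hc2⟩ := edge_package (r := r) hG he
      refine ⟨(x, y), he, rfl, c, hc1, ?_⟩
      intro j hj
      obtain ⟨H, h1, hsupp, h2, h3⟩ := hc2 j hj
      exact ⟨H, ⟨h1, hsupp⟩, h2, h3⟩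
  choose pfun hadj heqe cfun hcc2 hrest using pkg
  choose Hfun hH using hrest
  -- color-index equivalences
  have hcard : ∀ e : G.edgeSet,
      Fintype.card {i : Fin (r + 3) // i ≠ cfun e (pfun e).1} = r + 2 := by
    intro e
    have h1 : Fintype.card {i : Fin (r + 3) // ¬ (i = cfun e (pfun e).1)} =
        Fintype.card (Fin (r + 3)) - Fintype.card {i : Fin (r + 3) // i = cfun e (pfun e).1} :=
      Fintype.card_subtype_compl _
    have h2 : Fintype.card {i : Fin (r + 3) // i = cfun e (pfun e).1} = 1 :=
      Fintype.card_subtype_eq _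
    have h3 : Fintype.card {i : Fin (r + 3) // i ≠ cfun e (pfun e).1} =
        Fintype.card {i : Fin (r + 3) // ¬ (i = cfun e (pfun e).1)} := rfl
    rw [h3, h1, h2, Fintype.card_fin]
    omega
  let σfun : ∀ e : G.edgeSet, Fin (r + 2) ≃ {i : Fin (r + 3) // i ≠ cfun e (pfun e).1} :=
    fun e => (Fintype.equivFinOfCardEq (hcard e)).symm
  -- the injection
  let Θ : G.edgeSet × Equiv.Perm (Fin (r + 2)) → (Fin (r + 2) → ↥CS) :=
    fun q i => ⟨Hfun q.1 (σfun q.1 (q.2 i)).1 (σfun q.1 (q.2 i)).2,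
      (hH q.1 _ (σfun q.1 (q.2 i)).2).1.1⟩
  have hΘinj : Function.Injective Θ := by
    rintro ⟨e, π⟩ ⟨e', π'⟩ hqq
    have hval : ∀ i, (Θ (e, π) i : G.Subgraph) = (Θ (e', π') i : G.Subgraph) :=
      fun i => congrArg Subtype.val (congrFun hqq i)
    have hcommon : ∀ jj : {i : Fin (r + 3) // i ≠ cfun e (pfun e).1},
        (Hfun e jj.1 jj.2).Adj (pfun e').1 (pfun e').2 := by
      intro jj
      obtain ⟨i, hi⟩ : ∃ i, σfun e (π i) = jj := ⟨π.symm ((σfun e).symm jj), by simp⟩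
      have h1 : Hfun e (σfun e (π i)).1 (σfun e (π i)).2 =
          Hfun e' (σfun e' (π' i)).1 (σfun e' (π' i)).2 := hval i
      rw [hi] at h1
      rw [h1]
      exact (hH e' _ _).2.1
    have he' : (e' : Sym2 V) = (e : Sym2 V) := by
      rw [heqe e, heqe e']
      exact common_edge (cfun e) (hcc2 e) (hadj e')
        (fun j hj => (hH e j hj).2.2 _ _ (hcommon ⟨j, hj⟩))
    have hee : e = e' := Subtype.ext he'.symm
    subst hee
    have hπ : π = π' := by
      apply Equiv.ext
      intro i
      by_contra hne2
      have h1 : Hfun e (σfun e (π i)).1 (σfun e (π i)).2 =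
          Hfun e (σfun e (π' i)).1 (σfun e (π' i)).2 := hval i
      have hjj : (σfun e (π i)).1 ≠ (σfun e (π' i)).1 := by
        intro hcontr
        exact hne2 ((σfun e).injective.eq_iff.mp (Subtype.ext hcontr) ▸ rfl)
      have hav' := (hH e (σfun e (π' i)).1 (σfun e (π' i)).2).2.2
      rw [← h1] at hav'
      exact distinct_js (cfun e) hjj (hH e _ (σfun e (π i)).2).1.1
        (hH e _ (σfun e (π i)).2).2.1 (hH e _ (σfun e (π i)).2).1.2
        ((hH e _ (σfun e (π i)).2).2.2) hav'
    rw [hπ]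
  have hcount := Nat.card_le_card_of_injective Θ hΘinj
  rw [Nat.card_prod, Nat.card_fun] at hcount
  have hc1 : Nat.card ↥G.edgeSet = G.edgeSet.ncard := Nat.card_coe_set_eq _
  have hc2 : Nat.card (Equiv.Perm (Fin (r + 2))) = (r + 2).factorial := by
    rw [Nat.card_eq_fintype_card, Fintype.card_perm, Fintype.card_fin]
  have hc3 : Nat.card (Fin (r + 2)) = r + 2 := by
    rw [Nat.card_eq_fintype_card, Fintype.card_fin]
  rw [hc1, hc2, hc3] at hcount
  have key : (r + 3).factorial * Fintype.card V ≤ 2 * (Nat.card ↥CS) ^ (r + 2) := by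
    have h2 : Fintype.card V * (r + 3) ≤ 2 * G.edgeSet.ncard := by
      rw [hmcard]; exact hhs
    calc (r + 3).factorial * Fintype.card V
        = (r + 2).factorial * (Fintype.card V * (r + 3)) := by
          rw [Nat.factorial_succ]; ring
      _ ≤ (r + 2).factorial * (2 * G.edgeSet.ncard) := Nat.mul_le_mul_left _ h2
      _ = 2 * (G.edgeSet.ncard * (r + 2).factorial) := by ring
      _ ≤ 2 * ((Nat.card ↥CS) ^ (r + 2)) := Nat.mul_le_mul_left _ hcount
  -- real arithmetic
  rw [hcc]
  have hfR : ((r + 3).factorial : ℝ) * (Fintype.card V : ℝ) / 2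
      ≤ (Nat.card ↥CS : ℝ) ^ (r + 2 : ℕ) := by
    rw [div_le_iff₀ (by norm_num : (0:ℝ) < 2)]
    calc ((r + 3).factorial : ℝ) * (Fintype.card V : ℝ)
        = (((r + 3).factorial * Fintype.card V : ℕ) : ℝ) := by push_cast; ring
      _ ≤ ((2 * (Nat.card ↥CS) ^ (r + 2) : ℕ) : ℝ) := by exact_mod_cast key
      _ = (Nat.card ↥CS : ℝ) ^ (r + 2 : ℕ) * 2 := by push_cast; ring
  have hexp : ((r + 4 : ℕ) : ℝ) - 2 = ((r : ℝ) + 2) := by push_cast; ring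
  rw [hexp]
  have hbase : (0:ℝ) ≤ ((r + 3).factorial : ℝ) * (Fintype.card V : ℝ) / 2 := by positivity
  have h1 : (((r + 3).factorial : ℝ) * (Fintype.card V : ℝ) / 2) ^ ((1:ℝ)/((r:ℝ)+2))
      ≤ ((Nat.card ↥CS : ℝ) ^ (r + 2 : ℕ)) ^ ((1:ℝ)/((r:ℝ)+2)) :=
    Real.rpow_le_rpow hbase hfR (by positivity)
  refine h1.trans ?_
  rw [← Real.rpow_natCast (Nat.card ↥CS : ℝ) (r + 2),
    ← Real.rpow_mul (by positivity : (0:ℝ) ≤ (Nat.card ↥CS : ℝ))]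
  have hone : ((r + 2 : ℕ) : ℝ) * ((1:ℝ)/((r:ℝ)+2)) = 1 := by
    have : ((r : ℝ) + 2) ≠ 0 := by positivity
    push_cast
    field_simp
  rw [hone, Real.rpow_one]
end

section
/- If G is a k-critical graph (k ≥ 4) and {u,v} is a 2-cut of G, then uv is not an edge of G. -/
open SimpleGraph

lemma exists_perm_pair {α : Type*} [DecidableEq α] {a b a' b' : α} (h : a ≠ b) (h' : a' ≠ b') :
    ∃ σ : Equiv.Perm α, σ a = a' ∧ σ b = b' := by
  set c := Equiv.swap a a' b with hc
  have hca : a' ≠ c := by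
    rw [hc]; intro he
    exact h ((Equiv.swap a a').injective ((Equiv.swap_apply_left a a').trans he))
  refine ⟨(Equiv.swap a a').trans (Equiv.swap c b'), ?_, ?_⟩
  · simp only [Equiv.trans_apply, Equiv.swap_apply_left]
    exact Equiv.swap_apply_of_ne_of_ne hca h'
  · simp only [Equiv.trans_apply, ← hc, Equiv.swap_apply_left]

/-- If `{u, v}` is a 2-cut of a `k`-critical graph (`k ≥ 4`), then
`uv` is not an edge. -/
theorem two_cut_not_adjacent {V : Type*} [Fintype V] (G : SimpleGraph V)
    (k : ℕ) (hk : 4 ≤ k) (hG : IsCritical G k) (u v : V) (huv : u ≠ v)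
    (hcut : ¬ ((⊤ : G.Subgraph).deleteVerts {u, v}).coe.Connected) :
    ¬ G.Adj u v := by
  classical
  intro hadj
  obtain ⟨hchi, hcrit⟩ := hG
  set m := k - 1 with hm
  have colorable : ∀ H : G.Subgraph, H ≠ ⊤ → H.coe.Colorable m := by
    intro H hne
    have hlt := hcrit H hne
    rw [← SimpleGraph.chromaticNumber_le_iff_colorable]
    have ht : H.coe.chromaticNumber ≠ ⊤ := ne_top_of_lt hlt
    lift H.coe.chromaticNumber to ℕ using ht with n hn
    rw [Nat.cast_lt] at hlt
    exact_mod_cast Nat.cast_le.mpr (by omega : n ≤ m)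
  have chrocon : ¬ G.Colorable m := by
    intro hc
    have := SimpleGraph.chromaticNumber_le_iff_colorable.mpr hc
    rw [hchi, Nat.cast_le] at this
    omega
  -- the deleted graph
  by_cases hne : Nonempty ((⊤ : G.Subgraph).deleteVerts {u, v}).verts
  case neg =>
    -- V ⊆ {u, v}: 2-colorable
    have hsmall : ∀ w : V, w = u ∨ w = v := by
      intro w
      by_contra hw
      push_neg at hw
      exact hne ⟨⟨w, by simp [hw.1, hw.2]⟩⟩
    apply chrocon
    have h2 : G.Colorable 2 := by
      refine ⟨⟨fun w => if w = u then 0 else 1, ?_⟩⟩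
      intro a b hab hc
      by_cases hau : a = u <;> by_cases hbu : b = u
      · exact hab.ne (hau.trans hbu.symm)
      · simp [hau, hbu] at hc
      · simp [hau, hbu] at hc
      · exact hab.ne (((hsmall a).resolve_left hau).trans
          (((hsmall b).resolve_left hbu)).symm)
    exact h2.mono (by omega)
  case pos =>
    set S : Set V := ((⊤ : G.Subgraph).deleteVerts {u, v}).verts with hS
    set K := ((⊤ : G.Subgraph).deleteVerts {u, v}).coe with hK
    have hSmem : ∀ w : V, w ∈ S ↔ w ≠ u ∧ w ≠ v := by
      intro w; simp [hS]
    have hpre : ¬ K.Preconnected := fun h => hcut (@SimpleGraph.Connected.mk _ _ h hne)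
    obtain ⟨x, y, hxy⟩ : ∃ x y, ¬ K.Reachable x y := by
      by_contra h; push_neg at h; exact hpre fun a b => h a b
    set C : Set V := {w | ∃ h : w ∈ S, K.Reachable x ⟨w, h⟩} with hC
    have hsep : ∀ a b : V, a ∈ C → b ∈ S → G.Adj a b → b ∈ C := by
      rintro a b ⟨ha, hra⟩ hb hab
      refine ⟨hb, hra.trans (SimpleGraph.Adj.reachable ?_)⟩
      rw [hK, SimpleGraph.Subgraph.coe_adj]
      rw [hSmem] at ha hb
      simp [SimpleGraph.Subgraph.deleteVerts_adj, ha.1, ha.2, hb.1, hb.2, hab]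
    set A : Set V := C ∪ {u, v} with hA
    set B : Set V := (S \ C) ∪ {u, v} with hB
    have huA : u ∈ A := Or.inr (by simp)
    have hvA : v ∈ A := Or.inr (by simp)
    have huB : u ∈ B := Or.inr (by simp)
    have hvB : v ∈ B := Or.inr (by simp)
    have hxC : (x : V) ∈ C := ⟨x.2, Reachable.refl x⟩
    have hyD : (y : V) ∈ S \ C := by
      refine ⟨y.2, ?_⟩
      rintro ⟨h, hr⟩
      exact hxy hr
    have hynA : (y : V) ∉ A := by
      rintro (h | h)
      · exact hyD.2 h
      · rcases ((hSmem _).mp y.2) with ⟨h1, h2⟩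
        rcases h with h | h
        · exact h1 h
        · exact h2 h
    have hxnB : (x : V) ∉ B := by
      rintro (h | h)
      · exact h.2 hxC
      · rcases ((hSmem _).mp x.2) with ⟨h1, h2⟩
        rcases h with h | h
        · exact h1 h
        · exact h2 h
    set H₁ : G.Subgraph := (⊤ : G.Subgraph).induce A with hH₁
    set H₂ : G.Subgraph := (⊤ : G.Subgraph).induce B with hH₂
    have hne₁ : H₁ ≠ ⊤ := by
      intro h
      apply hynA
      have : H₁.verts = Set.univ := by rw [h]; rfl
      rw [hH₁] at this
      simp only [SimpleGraph.Subgraph.induce_verts] at this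
      rw [this]; trivial
    have hne₂ : H₂ ≠ ⊤ := by
      intro h
      apply hxnB
      have : H₂.verts = Set.univ := by rw [h]; rfl
      rw [hH₂] at this
      simp only [SimpleGraph.Subgraph.induce_verts] at this
      rw [this]; trivial
    obtain ⟨c₁⟩ := colorable H₁ hne₁
    obtain ⟨c₂⟩ := colorable H₂ hne₂
    have hadj₁ : H₁.coe.Adj ⟨u, huA⟩ ⟨v, hvA⟩ := by
      show H₁.Adj u v
      rw [hH₁, SimpleGraph.Subgraph.induce_adj]
      exact ⟨huA, hvA, by simpa using hadj⟩
    have hadj₂ : H₂.coe.Adj ⟨u, huB⟩ ⟨v, hvB⟩ := by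
      show H₂.Adj u v
      rw [hH₂, SimpleGraph.Subgraph.induce_adj]
      exact ⟨huB, hvB, by simpa using hadj⟩
    obtain ⟨σ, hσu, hσv⟩ := exists_perm_pair (c₂.valid hadj₂) (c₁.valid hadj₁)
    have hBmem : ∀ w : V, w ∉ A → w ∈ B := by
      intro w hw
      rw [hA] at hw
      simp only [Set.mem_union, not_or] at hw
      replace hw : w ∉ C ∧ w ∉ ({u, v} : Set V) := hw
      have hwuv : w ∉ ({u, v} : Set V) := hw.2
      simp only [Set.mem_insert_iff, Set.mem_singleton_iff] at hwuv
      push_neg at hwuv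
      exact Or.inl ⟨(hSmem w).mpr hwuv, hw.1⟩
    apply chrocon
    refine ⟨⟨fun w => if h : w ∈ A then c₁ ⟨w, h⟩ else σ (c₂ ⟨w, hBmem w h⟩), ?_⟩⟩
    have key : ∀ a b : V, G.Adj a b → a ∈ A → b ∉ A →
        (fun w => if h : w ∈ A then c₁ ⟨w, h⟩ else σ (c₂ ⟨w, hBmem w h⟩)) a ≠
        (fun w => if h : w ∈ A then c₁ ⟨w, h⟩ else σ (c₂ ⟨w, hBmem w h⟩)) b := by
      intro a b hab haA hbA
      simp only [dif_pos haA, dif_neg hbA]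
      have hbS : b ∈ S := by
        rcases hBmem b hbA with h | h
        · exact h.1
        · exact absurd (Or.inr h) hbA
      have haB : a ∈ B := by
        rcases haA with h | h
        · exact absurd (hsep a b h hbS hab) (fun hc => hbA (Or.inl hc))
        · exact Or.inr h
      have hadjH₂ : H₂.coe.Adj ⟨a, haB⟩ ⟨b, hBmem b hbA⟩ := by
        show H₂.Adj a b
        rw [hH₂, SimpleGraph.Subgraph.induce_adj]
        exact ⟨haB, hBmem b hbA, by simpa using hab⟩
      have hne2 : σ (c₂ ⟨a, haB⟩) ≠ σ (c₂ ⟨b, hBmem b hbA⟩) :=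
        σ.injective.ne (c₂.valid hadjH₂)
      rcases haA with h | h
      · exact absurd (hsep a b h hbS hab) (fun hc => hbA (Or.inl hc))
      · simp only [Set.mem_insert_iff, Set.mem_singleton_iff] at h
        rcases h with rfl | rfl
        · calc c₁ ⟨a, by exact Or.inr (Or.inl rfl)⟩ = σ (c₂ ⟨a, haB⟩) := hσu.symm
            _ ≠ σ (c₂ ⟨b, hBmem b hbA⟩) := hne2
        · calc c₁ ⟨a, by exact Or.inr (Or.inr rfl)⟩ = σ (c₂ ⟨a, haB⟩) := hσv.symm
            _ ≠ σ (c₂ ⟨b, hBmem b hbA⟩) := hne2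
    intro a b hab
    by_cases haA : a ∈ A <;> by_cases hbA : b ∈ A
    · simp only [dif_pos haA, dif_pos hbA]
      refine c₁.valid (?_ : H₁.Adj a b)
      rw [hH₁, SimpleGraph.Subgraph.induce_adj]
      exact ⟨haA, hbA, by simpa using hab⟩
    · exact key a b hab haA hbA
    · exact (key b a hab.symm hbA haA).symm
    · simp only [dif_neg haA, dif_neg hbA]
      refine σ.injective.ne (c₂.valid (?_ : H₂.Adj a b))
      rw [hH₂, SimpleGraph.Subgraph.induce_adj]
      exact ⟨hBmem a haA, hBmem b hbA, by simpa using hab⟩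
end

section
/- If s is a vertex in a 3-connected graph G such that G - s is non-bipartite, then there is an induced odd cycle C in G with s ∉ V(C) such that G - V(C) is connected. -/
open SimpleGraph

namespace NSOC


variable {V : Type*} {G : SimpleGraph V}

/-- Connectivity within a vertex set `S`. -/
def ConnOn (G : SimpleGraph V) (S : Set V) (u v : V) : Prop :=
  ∃ w : G.Walk u v, ∀ x ∈ w.support, x ∈ S

lemma ConnOn.refl {S : Set V} {u : V} (h : u ∈ S) : ConnOn G S u u :=
  ⟨Walk.nil, by simp [h]⟩

lemma ConnOn.symm {S : Set V} {u v : V} (h : ConnOn G S u v) : ConnOn G S v u := by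
  obtain ⟨w, hw⟩ := h
  exact ⟨w.reverse, by simpa using hw⟩

lemma ConnOn.trans {S : Set V} {u v x : V} (h : ConnOn G S u v) (h' : ConnOn G S v x) :
    ConnOn G S u x := by
  obtain ⟨w, hw⟩ := h; obtain ⟨w', hw'⟩ := h'
  refine ⟨w.append w', fun y hy => ?_⟩
  rw [Walk.mem_support_append_iff] at hy
  rcases hy with hy | hy
  · exact hw _ hy
  · exact hw' _ hy

lemma ConnOn.left_mem {S : Set V} {u v : V} (h : ConnOn G S u v) : u ∈ S := by
  obtain ⟨w, hw⟩ := h; exact hw _ w.start_mem_support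

lemma ConnOn.right_mem {S : Set V} {u v : V} (h : ConnOn G S u v) : v ∈ S := by
  obtain ⟨w, hw⟩ := h; exact hw _ w.end_mem_support

lemma ConnOn.mono {S S' : Set V} (hss : S ⊆ S') {u v : V} (h : ConnOn G S u v) :
    ConnOn G S' u v := by
  obtain ⟨w, hw⟩ := h; exact ⟨w, fun x hx => hss (hw x hx)⟩

lemma ConnOn.adj_right {S : Set V} {u v x : V} (h : ConnOn G S u v) (ha : G.Adj v x)
    (hx : x ∈ S) : ConnOn G S u x := by
  obtain ⟨w, hw⟩ := h
  refine ⟨w.append (Walk.cons ha Walk.nil), fun y hy => ?_⟩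
  rw [Walk.mem_support_append_iff] at hy
  rcases hy with hy | hy
  · exact hw _ hy
  · simp at hy
    rcases hy with rfl | rfl
    · exact hw _ w.end_mem_support
    · exact hx

/-- Every vertex on a witness walk is itself connected to the start. -/
lemma ConnOn.mem_of_support {S : Set V} {u v : V} (w : G.Walk u v)
    (hw : ∀ x ∈ w.support, x ∈ S) {x : V} (hx : x ∈ w.support) : ConnOn G S u x := by
  classical
  exact ⟨w.takeUntil x hx, fun y hy => hw _ (w.support_takeUntil_subset hx hy)⟩

/-- Restrict a `ConnOn` walk into the reachability class. -/
lemma ConnOn.within {S : Set V} {s u : V} (h : ConnOn G S s u) :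
    ConnOn G {x | ConnOn G S s x} s u := by
  obtain ⟨w, hw⟩ := h
  exact ⟨w, fun x hx => ConnOn.mem_of_support w hw hx⟩

/-- First-exit lemma: a walk starting in `B` and ending outside `B` contains an edge
leaving `B` with the far endpoint on the walk. -/
lemma exists_exit {B : Set V} {u v : V} (w : G.Walk u v) (hu : u ∈ B) (hv : v ∉ B) :
    ∃ a b, a ∈ B ∧ b ∉ B ∧ G.Adj a b ∧ b ∈ w.support := by
  classical
  induction w with
  | nil => exact absurd hu hv
  | @cons a c v ha p ih =>
    by_cases hc : c ∈ B
    · obtain ⟨x, y, h1, h2, h3, h4⟩ := ih hc hv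
      exact ⟨x, y, h1, h2, h3, by simp [h4]⟩
    · exact ⟨a, c, hu, hc, ha, by simp⟩





lemma connOn_of_coe_walk {S : Set V} {a b : ((⊤ : G.Subgraph).deleteVerts S).verts}
    (w : ((⊤ : G.Subgraph).deleteVerts S).coe.Walk a b) :
    ConnOn G (Set.univ \ S) a b := by
  induction w with
  | @nil u =>
    refine ⟨Walk.nil, ?_⟩
    rintro x hx
    simp only [Walk.support_nil, List.mem_singleton] at hx
    subst hx
    simpa [Subgraph.deleteVerts_verts] using u.2
  | @cons u c v ha p ih =>
    obtain ⟨q, hq⟩ := ih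
    have hadj : G.Adj u c := by
      have h2 := (Subgraph.coe_adj _ _ _).mp ha
      simp only [Subgraph.deleteVerts_adj] at h2
      simpa using h2.2.2.2.2
    refine ⟨Walk.cons hadj q, ?_⟩
    intro x hx
    simp only [Walk.support_cons, List.mem_cons] at hx
    rcases hx with rfl | hx
    · simpa [Subgraph.deleteVerts_verts] using u.2
    · exact hq _ hx

lemma coe_reachable_of_connOn {S : Set V} {a b : V} (w : G.Walk a b)
    (hw : ∀ x ∈ w.support, x ∈ (Set.univ \ S : Set V)) :
    ∀ (ha : a ∈ ((⊤ : G.Subgraph).deleteVerts S).verts)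
      (hb : b ∈ ((⊤ : G.Subgraph).deleteVerts S).verts),
      ((⊤ : G.Subgraph).deleteVerts S).coe.Reachable ⟨a, ha⟩ ⟨b, hb⟩ := by
  induction w with
  | nil => intro ha hb; rfl
  | @cons a c v hadj p ih =>
    intro ha hb
    have hc : c ∈ ((⊤ : G.Subgraph).deleteVerts S).verts := by
      have := hw c (by simp)
      simpa [Subgraph.deleteVerts_verts] using this
    have step : ((⊤ : G.Subgraph).deleteVerts S).coe.Adj ⟨a, ha⟩ ⟨c, hc⟩ := by
      simp only [Subgraph.coe_adj, Subgraph.deleteVerts_adj]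
      have ha2 : a ∈ Set.univ \ S := by simpa [Subgraph.deleteVerts_verts] using ha
      have hc2 : c ∈ Set.univ \ S := by simpa [Subgraph.deleteVerts_verts] using hc
      exact ⟨by trivial, ha2.2, by trivial, hc2.2, by simpa using hadj⟩
    exact (step.reachable).trans (ih (fun x hx => hw x (by simp [hx])) hc hb)

lemma coe_connected_iff {S : Set V} :
    ((⊤ : G.Subgraph).deleteVerts S).coe.Connected ↔
      ((Set.univ \ S : Set V).Nonempty ∧
        ∀ a b, a ∈ (Set.univ \ S : Set V) → b ∈ (Set.univ \ S : Set V) →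
          ConnOn G (Set.univ \ S) a b) := by
  constructor
  · intro h
    have hne : ((⊤ : G.Subgraph).deleteVerts S).verts.Nonempty := by
      obtain ⟨⟨x, hx⟩⟩ := h.nonempty
      exact ⟨x, hx⟩
    refine ⟨by simpa [Subgraph.deleteVerts_verts] using hne, fun a b ha hb => ?_⟩
    have ha' : a ∈ ((⊤ : G.Subgraph).deleteVerts S).verts := by
      simpa [Subgraph.deleteVerts_verts] using ha
    have hb' : b ∈ ((⊤ : G.Subgraph).deleteVerts S).verts := by
      simpa [Subgraph.deleteVerts_verts] using hb
    obtain ⟨w⟩ := h.preconnected ⟨a, ha'⟩ ⟨b, hb'⟩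
    exact connOn_of_coe_walk w
  · rintro ⟨⟨x, hx⟩, hconn⟩
    have hx' : x ∈ ((⊤ : G.Subgraph).deleteVerts S).verts := by
      simpa [Subgraph.deleteVerts_verts] using hx
    haveI : Nonempty ((⊤ : G.Subgraph).deleteVerts S).verts := ⟨⟨x, hx'⟩⟩
    refine Connected.mk ?_
    intro a b
    have ha : (a : V) ∈ (Set.univ \ S : Set V) := by
      have := a.2; simpa [Subgraph.deleteVerts_verts] using this
    have hb : (b : V) ∈ (Set.univ \ S : Set V) := by
      have := b.2; simpa [Subgraph.deleteVerts_verts] using this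
    obtain ⟨w, hw⟩ := hconn a b ha hb
    have := coe_reachable_of_connOn w hw a.2 b.2
    simpa using this



lemma odd_closed_walk_to_cycle {S : Set V} :
    ∀ n : ℕ, ∀ (v : V) (w : G.Walk v v), w.length = n → Odd n →
      (∀ x ∈ w.support, x ∈ S) →
      ∃ (u : V) (c : G.Walk u u), c.IsCycle ∧ Odd c.length ∧ ∀ x ∈ c.support, x ∈ S := by
  classical
  intro n
  induction n using Nat.strong_induction_on with
  | _ n ih =>
    intro v w hl hodd hS
    -- length is not 0 or 1, so ≥ 3 if tail is nodup we'll get a cycle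
    have hne1 : n ≠ 1 := by
      intro h1
      subst h1
      cases w with
      | nil => simp at hl
      | cons e p =>
        have : p.length = 0 := by simpa using hl
        have : p.Nil := Walk.nil_iff_length_eq.mpr this
        cases p with
        | nil => exact e.ne rfl
        | cons _ _ => simp at this
    have hn3 : 3 ≤ n := by
      rcases hodd with ⟨k, hk⟩
      omega
    by_cases hnd : w.support.tail.Nodup
    · -- w is already a cycle
      cases w with
      | nil => simp at hl; omega
      | @cons _ c _ e r =>
        have hrsupp : r.support.Nodup := by simpa using hnd
        have hrpath : r.IsPath := (Walk.isPath_def r).mpr hrsupp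
        have hedge : s(v, c) ∉ r.edges := by
          intro hmem
          cases r with
          | nil => exact e.ne (by simpa using hrpath.eq_nil_of_loop ▸ rfl)
          | @cons _ c₃ _ e₂ r₂ =>
            simp only [Walk.edges_cons, List.mem_cons] at hmem
            rcases hmem with heq | hmem
            · -- s(v,c) = s(c,c₃): forces v = c₃
              rw [Sym2.eq_iff] at heq
              rcases heq with ⟨h1, h2⟩ | ⟨h1, h2⟩
              · exact e.ne h1
              · -- v = c₃
                subst h1
                cases r₂ with
                | nil =>
                  -- total length 2 : contradiction with n ≥ 3
                  simp at hl; omega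
                | cons e₃ r₃ =>
                  have hv : v ∈ r₃.support := by
                    have := r₃.end_mem_support
                    simpa using Walk.end_mem_support r₃
                  have : ¬ (Walk.cons e₂ (Walk.cons e₃ r₃)).support.Nodup := by
                    simp only [Walk.support_cons, List.nodup_cons]
                    intro hcon
                    exact hcon.2.1 (by simp [hv])
                  exact this hrsupp
            · have : c ∈ r₂.support := Walk.snd_mem_support_of_mem_edges r₂ hmem
              have : ¬ (Walk.cons e₂ r₂).support.Nodup := by
                simp only [Walk.support_cons, List.nodup_cons]
                intro hcon
                exact hcon.1 this
              exact this hrsupp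
        have hcyc : (Walk.cons e r).IsCycle := (Walk.cons_isCycle_iff r e).mpr ⟨hrpath, hedge⟩
        exact ⟨v, Walk.cons e r, hcyc, hl ▸ hodd, hS⟩
    · -- there is a repeated vertex in the tail: split
      obtain ⟨y, hdup⟩ := List.exists_duplicate_iff_not_nodup.mpr hnd
      have hcount : 2 ≤ w.support.tail.count y := List.duplicate_iff_two_le_count.mp hdup
      have hy : y ∈ w.support := List.mem_of_mem_tail hdup.mem
      set w' := w.rotate y hy with hw'
      have hperm : List.Perm (w.rotate y hy).support.tail w.support.tail := (Walk.support_rotate w y hy).perm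
      have hcount' : 2 ≤ w'.support.tail.count y := by
        rw [hw', hperm.count_eq]; exact hcount
      have hlen' : w'.length = n := by
        rw [hw']
        rw [Walk.rotate, Walk.length_append, ← hl]
        conv_rhs => rw [← Walk.take_spec w hy]
        rw [Walk.length_append]; omega
      -- w' is a nonnil closed walk at y
      have hsupp' : ∀ x ∈ w'.support, x ∈ S := by
        intro x hx
        rw [Walk.mem_support_iff] at hx
        rcases hx with rfl | hx
        · exact hS _ hy
        · exact hS _ (List.mem_of_mem_tail (hperm.mem_iff.mp hx))
      cases hw'' : w' with
      | nil =>
        rw [hw''] at hlen'; simp at hlen'; omega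
      | @cons _ c _ e r =>
        rw [hw''] at hcount' hlen' hsupp'
        have hcr : 2 ≤ r.support.count y := by
          simpa using hcount'
        have hyr : y ∈ r.support := by
          rw [← List.count_pos_iff]; omega
        set t := r.takeUntil y hyr with ht
        set d := r.dropUntil y hyr with hd
        have hsplit : t.append d = r := Walk.take_spec r hyr
        have hlsum : t.length + d.length = r.length := by
          rw [← hsplit, Walk.length_append]
        have hrlen : r.length + 1 = n := by simpa using hlen'
        have hdne : d.length ≠ 0 := by
          intro h0
          have : d.Nil := Walk.nil_iff_length_eq.mpr h0
          have hdeq : r = t := by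
            rw [← hsplit, this.eq_nil, Walk.append_nil]
          have h1 : t.support.count y = 1 := Walk.count_support_takeUntil_eq_one r hyr
          rw [← hdeq] at h1
          omega
        have hw1 : (Walk.cons e t).length + d.length = n := by
          simp only [Walk.length_cons]; omega
        have hsub_t : ∀ x ∈ t.support, x ∈ S := fun x hx =>
          hsupp' x (by simp [Walk.support_cons]; right; exact r.support_takeUntil_subset hyr hx)
        have hsub_d : ∀ x ∈ d.support, x ∈ S := fun x hx =>
          hsupp' x (by simp [Walk.support_cons]; right; exact r.support_dropUntil_subset hyr hx)
        have hsub_w1 : ∀ x ∈ (Walk.cons e t).support, x ∈ S := by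
          intro x hx
          simp only [Walk.support_cons, List.mem_cons] at hx
          rcases hx with rfl | hx
          · exact hS _ hy
          · exact hsub_t _ hx
        rcases Nat.even_or_odd (Walk.cons e t).length with hev | hod
        · -- then d has odd length
          have : Odd d.length := by
            rcases hodd with ⟨k, hk⟩; rcases hev with ⟨m, hm⟩
            refine ⟨k - m, by omega⟩
          exact ih d.length (by omega) y d rfl this hsub_d
        · exact ih (Walk.cons e t).length (by have := hdne; omega) y (Walk.cons e t) rfl hod hsub_w1



lemma end_mem_support_tail {a b : V} (w : G.Walk a b) (h : ¬w.Nil) : b ∈ w.support.tail := by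
  cases w with
  | nil => simp at h
  | cons e r => simpa using r.end_mem_support

lemma mem_tail_of_closed {a x : V} {w : G.Walk a a} (hnil : ¬w.Nil) (hx : x ∈ w.support) :
    x ∈ w.support.tail := by
  rw [Walk.mem_support_iff] at hx
  rcases hx with rfl | hx
  · exact end_mem_support_tail w hnil
  · exact hx

lemma pos_length_of_ne {a b : V} (w : G.Walk a b) (h : a ≠ b) : 1 ≤ w.length := by
  cases w with
  | nil => exact absurd rfl h
  | cons e r => simp

lemma single_edge_mem {a b : V} (w : G.Walk a b) (h : w.length = 1) : s(a, b) ∈ w.edges := by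
  cases w with
  | nil => simp at h
  | cons e r =>
    have : r.length = 0 := by simpa using h
    have : r.Nil := Walk.nil_iff_length_eq.mpr this
    cases r with
    | nil => simp
    | cons _ _ => simp at this

lemma support_rotate_subset [DecidableEq V] {a u x : V} (w : G.Walk a a) (hu : u ∈ w.support)
    (hx : x ∈ (w.rotate u hu).support) : x ∈ w.support := by
  rw [Walk.mem_support_iff] at hx
  rcases hx with rfl | hx
  · exact hu
  · exact List.mem_of_mem_tail ((Walk.support_rotate w u hu).perm.mem_iff.mp hx)

/-- Tail-decomposition of a closed walk at a support vertex. -/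
lemma split_tail_eq [DecidableEq V] {u v : V} (c : G.Walk u u) (hv : v ∈ c.support) :
    c.support.tail = (c.takeUntil v hv).support.tail ++ (c.dropUntil v hv).support.tail := by
  have h1 : ((c.takeUntil v hv).append (c.dropUntil v hv)).support = c.support :=
    congrArg Walk.support (c.take_spec hv)
  rw [Walk.support_append] at h1
  have h2 := congrArg List.tail h1.symm
  rw [Walk.support_eq_cons (c.takeUntil v hv)] at h2
  simpa using h2

/-- Main splitting facts for a cycle. -/
lemma cycle_split [DecidableEq V] {u v : V} {c : G.Walk u u} (hc : c.IsCycle)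
    (hv : v ∈ c.support) (hvu : v ≠ u) :
    (c.takeUntil v hv).IsPath ∧ (c.dropUntil v hv).IsPath ∧
    List.Disjoint (c.takeUntil v hv).support.tail (c.dropUntil v hv).support.tail ∧
    u ∉ (c.takeUntil v hv).support.tail ∧ v ∉ (c.dropUntil v hv).support.tail := by
  set p := c.takeUntil v hv with hp
  set q := c.dropUntil v hv with hq
  have htail : c.support.tail = p.support.tail ++ q.support.tail := split_tail_eq c hv
  have hnodup : (p.support.tail ++ q.support.tail).Nodup := by
    rw [← htail]; exact hc.support_nodup
  rw [List.nodup_append] at hnodup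
  obtain ⟨hnp, hnq, hdisj⟩ := hnodup
  have hqnil : ¬q.Nil := by
    intro h
    have := Walk.nil_iff_length_eq.mp h
    have := pos_length_of_ne q hvu
    omega
  have hpnil : ¬p.Nil := by
    intro h
    have := Walk.nil_iff_length_eq.mp h
    have : (1:ℕ) ≤ p.length := pos_length_of_ne p (Ne.symm hvu)
    omega
  have humem : u ∈ q.support.tail := end_mem_support_tail q hqnil
  have hvmem : v ∈ p.support.tail := end_mem_support_tail p hpnil
  have hup : u ∉ p.support.tail := fun h => hdisj _ h _ humem rfl
  have hvq : v ∉ q.support.tail := fun h => hdisj _ hvmem _ h rfl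
  refine ⟨?_, ?_, fun a ha hb => hdisj a ha a hb rfl, hup, hvq⟩
  · rw [Walk.isPath_def, Walk.support_eq_cons p]
    exact List.nodup_cons.mpr ⟨hup, hnp⟩
  · rw [Walk.isPath_def, Walk.support_eq_cons q]
    exact List.nodup_cons.mpr ⟨hvq, hnq⟩

/-- The chord argument: a chord of an odd cycle produces a strictly shorter odd cycle
with support inside. -/
lemma chord_improve [DecidableEq V] {v₀ u v : V} {w₀ : G.Walk v₀ v₀} (hc : w₀.IsCycle)
    (hOdd : Odd w₀.length)
    (hu : u ∈ w₀.support) (hv : v ∈ w₀.support) (hadj : G.Adj u v)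
    (hne : s(u, v) ∉ w₀.edges) :
    ∃ (x : V) (c : G.Walk x x), c.IsCycle ∧ Odd c.length ∧ c.length < w₀.length ∧
      ∀ y ∈ c.support, y ∈ w₀.support := by
  set rot := w₀.rotate u hu with hrot
  have hrc : rot.IsCycle := hc.rotate hu
  have hrnil : ¬rot.Nil := hrc.not_nil
  have hvr : v ∈ rot.support := by
    rw [Walk.mem_support_iff]
    right
    exact (Walk.support_rotate w₀ u hu).perm.mem_iff.mpr
      (mem_tail_of_closed hc.not_nil hv)
  have hvu : v ≠ u := hadj.ne'
  obtain ⟨hppath, hqpath, hdisj, hup, hvq⟩ := cycle_split hrc hvr hvu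
  set p := rot.takeUntil v hvr with hp
  set q := rot.dropUntil v hvr with hq
  have hedges_rot : ∀ e, e ∈ rot.edges → e ∈ w₀.edges := fun e he =>
    (Walk.rotate_edges w₀ u hu).mem_iff.mp he
  have hlen : p.length + q.length = w₀.length := by
    have := congrArg Walk.length (rot.take_spec hvr)
    rw [Walk.length_append] at this
    rw [this, hrot, Walk.rotate, Walk.length_append]
    conv_rhs => rw [← Walk.take_spec w₀ hu, Walk.length_append]
    omega
  -- lengths at least 2
  have hp2 : 2 ≤ p.length := by
    have h1 : 1 ≤ p.length := pos_length_of_ne p (Ne.symm hvu)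
    rcases Nat.lt_or_ge p.length 2 with h | h
    · exfalso
      have hpl : p.length = 1 := by omega
      have : s(u, v) ∈ p.edges := single_edge_mem p hpl
      exact hne (hedges_rot _ (rot.edges_takeUntil_subset hvr this))
    · exact h
  have hq2 : 2 ≤ q.length := by
    have h1 : 1 ≤ q.length := pos_length_of_ne q hvu
    rcases Nat.lt_or_ge q.length 2 with h | h
    · exfalso
      have hql : q.length = 1 := by omega
      have : s(v, u) ∈ q.edges := single_edge_mem q hql
      rw [Sym2.eq_swap] at this
      exact hne (hedges_rot _ (rot.edges_dropUntil_subset hvr this))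
    · exact h
  have hsupp_p : ∀ y ∈ p.support, y ∈ w₀.support := fun y hy =>
    support_rotate_subset w₀ hu (rot.support_takeUntil_subset hvr hy)
  have hsupp_q : ∀ y ∈ q.support, y ∈ w₀.support := fun y hy =>
    support_rotate_subset w₀ hu (rot.support_dropUntil_subset hvr hy)
  -- two cycles
  have hcyc1 : (Walk.cons hadj.symm p).IsCycle := by
    rw [Walk.cons_isCycle_iff]
    refine ⟨hppath, fun hmem => ?_⟩
    rw [Sym2.eq_swap] at hmem
    exact hne (hedges_rot _ (rot.edges_takeUntil_subset hvr hmem))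
  have hcyc2 : (Walk.cons hadj q).IsCycle := by
    rw [Walk.cons_isCycle_iff]
    exact ⟨hqpath, fun hmem => hne (hedges_rot _ (rot.edges_dropUntil_subset hvr hmem))⟩
  rcases Nat.even_or_odd p.length with hev | hod
  · refine ⟨v, Walk.cons hadj.symm p, hcyc1, ?_, by simp [Walk.length_cons]; omega, ?_⟩
    · rcases hev with ⟨m, hm⟩
      exact ⟨m, by simp [Walk.length_cons]; omega⟩
    · intro y hy
      simp only [Walk.support_cons, List.mem_cons] at hy
      rcases hy with rfl | hy
      · exact hv
      · exact hsupp_p _ hy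
  · refine ⟨u, Walk.cons hadj q, hcyc2, ?_, by simp [Walk.length_cons]; omega, ?_⟩
    · rcases hOdd with ⟨k, hk⟩
      rcases hod with ⟨m, hm⟩
      exact ⟨k - m, by simp [Walk.length_cons]; omega⟩
    · intro y hy
      simp only [Walk.support_cons, List.mem_cons] at hy
      rcases hy with rfl | hy
      · exact hu
      · exact hsupp_q _ hy


/-- candidate cycles: odd cycles avoiding `s`, recorded by component size and length. -/
def Cand (G : SimpleGraph V) (s : V) (m l : ℕ) : Prop :=
  ∃ (v : V) (w : G.Walk v v), w.IsCycle ∧ Odd w.length ∧ s ∉ w.support ∧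
    ({x | ConnOn G (Set.univ \ {y | y ∈ w.support}) s x}).ncard = m ∧ w.length = l

lemma second_vertex {a b : V} (w : G.Walk a b) (h : 1 ≤ w.length) :
    ∃ (c : V) (e : G.Adj a c) (r : G.Walk c b), w = Walk.cons e r := by
  cases w with
  | nil => simp at h
  | cons e r => exact ⟨_, e, r, rfl⟩

lemma mem_rot_support [DecidableEq V] {a u x : V} (w : G.Walk a a) (hu : u ∈ w.support)
    (hnil : ¬w.Nil) (hx : x ∈ w.support) : x ∈ (w.rotate u hu).support := by
  rw [Walk.mem_support_iff]
  right
  exact (Walk.support_rotate w u hu).perm.mem_iff.mpr (mem_tail_of_closed hnil hx)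

lemma three_distinct {T : Set V} (h : 3 ≤ T.ncard) :
    ∃ a b c, a ∈ T ∧ b ∈ T ∧ c ∈ T ∧ a ≠ b ∧ a ≠ c ∧ b ≠ c := by
  classical
  have hfin : T.Finite := by
    rcases T.finite_or_infinite with h' | h'
    · exact h'
    · rw [h'.ncard] at h; omega
  obtain ⟨a, ha⟩ := (Set.nonempty_of_ncard_ne_zero (by omega) : T.Nonempty)
  have h2 : 2 ≤ (T \ {a}).ncard := by
    rw [Set.ncard_diff_singleton_of_mem ha]; omega
  obtain ⟨b, hb⟩ := (Set.nonempty_of_ncard_ne_zero (by omega) : (T \ {a}).Nonempty)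
  have h1 : 1 ≤ ((T \ {a}) \ {b}).ncard := by
    rw [Set.ncard_diff_singleton_of_mem hb]; omega
  obtain ⟨c, hc⟩ := (Set.nonempty_of_ncard_ne_zero (by omega) : ((T \ {a}) \ {b}).Nonempty)
  refine ⟨a, b, c, ha, hb.1, hc.1.1, ?_, ?_, ?_⟩
  · rintro rfl; exact hb.2 rfl
  · rintro rfl; exact hc.1.2 rfl
  · rintro rfl; exact hc.2 rfl

lemma exists_third {T : Set V} (h : 3 ≤ T.ncard) (h1 h2 : V) :
    ∃ e ∈ T, e ≠ h1 ∧ e ≠ h2 := by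
  classical
  by_contra hcon
  push_neg at hcon
  have : T ⊆ {h1, h2} := by
    intro x hx
    rcases eq_or_ne x h1 with rfl | hx1
    · exact Set.mem_insert _ _
    · rcases eq_or_ne x h2 with rfl | hx2
      · exact Set.mem_insert_of_mem _ rfl
      · exact absurd hx2 (by simpa [hx1] using hcon x hx)
  have := Set.ncard_le_ncard this (Set.toFinite _)
  have h2' : ({h1, h2} : Set V).ncard ≤ 2 := Set.ncard_insert_le _ _ |>.trans (by simp)
  omega

/-- First vertex of a walk lying in `P` (given the endpoint is in `P`). -/
lemma firstin {P : Set V} : ∀ {u w : V} (p : G.Walk u w), w ∈ P →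
    ∃ (c : V) (r : G.Walk u c) (rest : G.Walk c w), p = r.append rest ∧ c ∈ P ∧
      (∀ x ∈ r.support, x ∈ P → x = c) := by
  classical
  intro u w p
  induction p with
  | nil => exact fun hw => ⟨_, Walk.nil, Walk.nil, by simp, hw, by simp⟩
  | @cons a a2 b e p' ih =>
    intro hw
    by_cases ha : a ∈ P
    · exact ⟨a, Walk.nil, Walk.cons e p', by simp, ha, by simp⟩
    · obtain ⟨c, r, rest, heq, hc, hfirst⟩ := ih hw
      refine ⟨c, Walk.cons e r, rest, by rw [heq]; simp [Walk.cons_append], hc, ?_⟩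
      intro x hx hxP
      simp only [Walk.support_cons, List.mem_cons] at hx
      rcases hx with rfl | hx
      · exact absurd hxP ha
      · exact hfirst x hx hxP

/-- Find an attachment-free gap on a walk whose support contains a non-`P` vertex. -/
lemma gapfind {P : Set V} : ∀ {a b : V} (p : G.Walk a b), a ∈ P → b ∈ P →
    (∃ t ∈ p.support, t ∉ P) →
    ∃ (h1 h2 : V) (pre : G.Walk a h1) (q : G.Walk h1 h2) (post : G.Walk h2 b),
      p = pre.append (q.append post) ∧ h1 ∈ P ∧ h2 ∈ P ∧ 2 ≤ q.length ∧
      (∀ x ∈ q.support, x ≠ h1 → x ≠ h2 → x ∉ P) := by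
  classical
  intro a b p
  induction p with
  | nil =>
    rintro ha _ ⟨t, ht, htP⟩
    simp only [Walk.support_nil, List.mem_singleton] at ht
    exact absurd (ht ▸ ha) htP
  | @cons a a2 b e p' ih =>
    rintro ha hb ⟨t, ht, htP⟩
    by_cases ha2 : a2 ∈ P
    · have ht' : t ∈ p'.support := by
        simp only [Walk.support_cons, List.mem_cons] at ht
        rcases ht with rfl | ht
        · exact absurd ha htP
        · exact ht
      obtain ⟨h1, h2, pre, q, post, heq, hh1, hh2, hq2, hgap⟩ := ih ha2 hb ⟨t, ht', htP⟩
      exact ⟨h1, h2, Walk.cons e pre, q, post, by rw [heq]; simp [Walk.cons_append], hh1, hh2,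
        hq2, hgap⟩
    · obtain ⟨c, r, rest, heq, hc, hfirst⟩ := firstin (P := P) p' hb
      have hrne : a2 ≠ c := fun h => ha2 (h ▸ hc)
      have hr1 : 1 ≤ r.length := pos_length_of_ne r hrne
      refine ⟨a, c, Walk.nil, Walk.cons e r, rest, by rw [heq]; simp [Walk.cons_append], ha, hc,
        by simp [Walk.length_cons]; omega, ?_⟩
      intro x hx hxa hxc
      simp only [Walk.support_cons, List.mem_cons] at hx
      rcases hx with rfl | hx
      · exact absurd rfl hxa
      · exact fun hxP => hxc (hfirst x hx hxP)


lemma support_tail_length {a b : V} (w : G.Walk a b) : w.support.tail.length = w.length := by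
  have h := Walk.length_support w
  rw [Walk.support_eq_cons w, List.length_cons] at h
  omega

lemma core {v₀ : V} (s d : V) {w₀ : G.Walk v₀ v₀} (hcyc₀ : w₀.IsCycle)
    (hodd₀ : Odd w₀.length) (hs₀ : s ∉ w₀.support)
    (hconn3 : ∀ S : Set V, S.ncard < 3 → (((⊤ : G.Subgraph).deleteVerts S)).coe.Connected)
    (hInd : ∀ u v, u ∈ w₀.support → v ∈ w₀.support → G.Adj u v → s(u, v) ∈ w₀.edges)
    (hkey : ∀ h : V, h ∉ {x | ConnOn G (Set.univ \ {y | y ∈ w₀.support}) s x} →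
      (∃ u, u ∈ {x | ConnOn G (Set.univ \ {y | y ∈ w₀.support}) s x} ∧ G.Adj u h) →
      ∀ (x : V) (c : G.Walk x x), c.IsCycle → Odd c.length →
      (∀ y ∈ c.support, y ∉ {x | ConnOn G (Set.univ \ {y | y ∈ w₀.support}) s x} ∧ y ≠ h) →
      False)
    (hdsupp : d ∉ w₀.support)
    (hdH : d ∉ {x | ConnOn G (Set.univ \ {y | y ∈ w₀.support}) s x}) :
    False := by
  classical
  set Csup : Set V := {y | y ∈ w₀.support} with hCsupdef
  set S₀ : Set V := Set.univ \ Csup with hS₀def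
  set H : Set V := {x | ConnOn G S₀ s x} with hHdef
  have hsS₀ : s ∈ S₀ := ⟨trivial, hs₀⟩
  have hsH : s ∈ H := ConnOn.refl hsS₀
  have hHS₀ : H ⊆ S₀ := fun z hz => hz.right_mem
  have hHC : ∀ z ∈ H, z ∉ Csup := fun z hz => (hHS₀ hz).2
  have hHwalk : ∀ z ∈ H, ConnOn G H s z := fun z hz => hz.within
  set Att : Set V := {x | x ∈ Csup ∧ ∃ u, u ∈ H ∧ G.Adj u x} with hAttdef
  have hAttC : Att ⊆ Csup := fun x hx => hx.1
  have hAttH : ∀ x ∈ Att, x ∉ H := fun x hx hH => (hHC x hH) hx.1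
  have att_in : ∀ z, z ∉ H → ∀ u, u ∈ H → G.Adj u z → z ∈ Att := by
    intro z hz u hu hadj
    by_cases hzc : z ∈ Csup
    · exact ⟨hzc, u, hu, hadj⟩
    · exact absurd (((hHwalk u hu).mono hHS₀).adj_right hadj ⟨trivial, hzc⟩) hz
  have kl : ∀ h ∈ Att, ∀ (x : V) (ω : G.Walk x x),
      (∀ y ∈ ω.support, y ∉ H ∧ y ≠ h) → Even ω.length := by
    intro h hh x ω hω
    by_contra hodd'
    rw [Nat.not_even_iff_odd] at hodd'
    obtain ⟨u', c, hc, hcodd, hcS⟩ :=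
      odd_closed_walk_to_cycle (S := {y | y ∉ H ∧ y ≠ h}) ω.length x ω rfl hodd' hω
    obtain ⟨hc1, u, hu, ha⟩ := hh
    exact hkey h (hAttH _ ⟨hc1, u, hu, ha⟩) ⟨u, hu, ha⟩ u' c hc hcodd hcS
  set D : Set V := {x | ConnOn G S₀ d x} with hDdef
  have hdS₀ : d ∈ S₀ := ⟨trivial, hdsupp⟩
  have hdD : d ∈ D := ConnOn.refl hdS₀
  have hDH : ∀ z ∈ D, z ∉ H := fun z hz hzH => hdH (hzH.trans hz.symm)
  have hDS₀ : D ⊆ S₀ := fun z hz => hz.right_mem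
  have hDC : ∀ z ∈ D, z ∉ Csup := fun z hz => (hDS₀ hz).2
  have hDwalk : ∀ z ∈ D, ConnOn G D d z := fun z hz => hz.within
  have hDconn : ∀ a b, a ∈ D → b ∈ D → ConnOn G D a b :=
    fun a b ha hb => ((hDwalk a ha).symm).trans (hDwalk b hb)
  set AttD : Set V := {x | x ∈ Csup ∧ ∃ u, u ∈ D ∧ G.Adj u x} with hAttDdef
  have attD_in : ∀ z, z ∉ D → ∀ u, u ∈ D → G.Adj u z → z ∈ AttD := by
    intro z hz u hu hadj
    by_cases hzc : z ∈ Csup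
    · exact ⟨hzc, u, hu, hadj⟩
    · exact absurd (((hDwalk u hu).mono hDS₀).adj_right hadj ⟨trivial, hzc⟩) hz
  have hsD : s ∉ D := fun hsD' => (hDH s hsD') hsH
  have hAtt3 : 3 ≤ Att.ncard := by
    by_contra hlt
    push_neg at hlt
    have hcc := hconn3 Att hlt
    rw [coe_connected_iff] at hcc
    have hsA : s ∈ Set.univ \ Att := ⟨trivial, fun hsAtt => (hAttH s hsAtt) hsH⟩
    have hdA : d ∈ Set.univ \ Att := ⟨trivial, fun hdAtt => hdsupp (hAttC hdAtt)⟩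
    obtain ⟨w, hw⟩ := hcc.2 s d hsA hdA
    obtain ⟨u, z, huH, hzH, hadj, hzsupp⟩ := exists_exit w hsH hdH
    exact (hw _ hzsupp).2 (att_in z hzH u huH hadj)
  have hAttD3 : 3 ≤ AttD.ncard := by
    by_contra hlt
    push_neg at hlt
    have hcc := hconn3 AttD hlt
    rw [coe_connected_iff] at hcc
    have hsA : s ∈ Set.univ \ AttD := ⟨trivial, fun hsAtt => hs₀ (hsAtt.1)⟩
    have hdA : d ∈ Set.univ \ AttD := ⟨trivial, fun hdAtt => hdsupp (hdAtt.1)⟩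
    obtain ⟨w, hw⟩ := hcc.2 d s hdA hsA
    obtain ⟨u, z, huD, hzD, hadj, hzsupp⟩ := exists_exit w hdD hsD
    exact (hw _ hzsupp).2 (attD_in z hzD u huD hadj)
  by_cases hATT : ∀ y ∈ w₀.support, y ∈ Att
  · -- CASE 1 : every vertex of the cycle is an attachment of H
    have pairstep : ∀ a b : V, a ∈ AttD → b ∈ AttD → a ≠ b → ¬G.Adj a b → False := by
      intro a b ha hb hne hnadj
      have haS : a ∈ w₀.support := ha.1
      have hbS : b ∈ w₀.support := hb.1
      set rot := w₀.rotate a haS with hrotdef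
      have hrc : rot.IsCycle := hcyc₀.rotate haS
      have hbr : b ∈ rot.support := mem_rot_support w₀ haS hcyc₀.not_nil hbS
      have hba : b ≠ a := hne.symm
      obtain ⟨hQpath, hQ'path, hdisj, haQt, hbQ't⟩ := cycle_split hrc hbr hba
      set Q := rot.takeUntil b hbr with hQdef
      set Q' := rot.dropUntil b hbr with hQ'def
      have hQsub : ∀ t ∈ Q.support, t ∈ w₀.support := fun t ht =>
        support_rotate_subset w₀ haS (rot.support_takeUntil_subset hbr ht)
      have hQ'sub : ∀ t ∈ Q'.support, t ∈ w₀.support := fun t ht =>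
        support_rotate_subset w₀ haS (rot.support_dropUntil_subset hbr ht)
      have hlen : Q.length + Q'.length = w₀.length := by
        have h1 := congrArg Walk.length (rot.take_spec hbr)
        rw [Walk.length_append] at h1
        rw [h1, hrotdef, Walk.rotate, Walk.length_append]
        conv_rhs => rw [← Walk.take_spec w₀ haS, Walk.length_append]
        omega
      have hQ2 : 2 ≤ Q.length := by
        have h1 : 1 ≤ Q.length := pos_length_of_ne Q hne
        rcases Nat.lt_or_ge Q.length 2 with h | h
        · exact absurd (Walk.adj_of_mem_edges Q (single_edge_mem Q (by omega))) hnadj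
        · exact h
      have hQ'2 : 2 ≤ Q'.length := by
        have h1 : 1 ≤ Q'.length := pos_length_of_ne Q' hba
        rcases Nat.lt_or_ge Q'.length 2 with h | h
        · exact absurd (Walk.adj_of_mem_edges Q' (single_edge_mem Q' (by omega))).symm hnadj
        · exact h
      obtain ⟨vQ, eQ, rQ, hQeq⟩ := second_vertex Q (by omega)
      obtain ⟨vQ', eQ', rQ', hQ'eq⟩ := second_vertex Q' (by omega)
      have hQtail : Q.support.tail = rQ.support := by rw [hQeq]; simp
      have hQ'tail : Q'.support.tail = rQ'.support := by rw [hQ'eq]; simp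
      have hQtnodup : Q.support.tail.Nodup := by
        have h1 := hQpath.support_nodup
        rw [Walk.support_eq_cons Q] at h1
        exact (List.nodup_cons.mp h1).2
      have hQ'tnodup : Q'.support.tail.Nodup := by
        have h1 := hQ'path.support_nodup
        rw [Walk.support_eq_cons Q'] at h1
        exact (List.nodup_cons.mp h1).2
      have hvQQt : vQ ∈ Q.support.tail := by rw [hQtail]; exact rQ.start_mem_support
      have hvQ'Q't : vQ' ∈ Q'.support.tail := by rw [hQ'tail]; exact rQ'.start_mem_support
      have hvQa : vQ ≠ a := fun h => haQt (h ▸ hvQQt)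
      have hvQb : vQ ≠ b := by
        intro hEq
        have hr1 : 1 ≤ rQ.length := by
          have := congrArg Walk.length hQeq
          simp only [Walk.length_cons] at this
          omega
        have hrnil : ¬rQ.Nil := by
          intro hn; rw [Walk.nil_iff_length_eq] at hn; omega
        have hmem : b ∈ rQ.support.tail := end_mem_support_tail rQ hrnil
        have hnd : rQ.support.Nodup := by rw [← hQtail]; exact hQtnodup
        rw [Walk.support_eq_cons rQ] at hnd
        exact absurd hmem (hEq ▸ (List.nodup_cons.mp hnd).1)
      have hvQ'b : vQ' ≠ b := by
        intro hEq
        exact hbQ't (hEq ▸ hvQ'Q't)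
      have hvQ'a : vQ' ≠ a := by
        intro hEq
        have hr1 : 1 ≤ rQ'.length := by
          have := congrArg Walk.length hQ'eq
          simp only [Walk.length_cons] at this
          omega
        have hrnil : ¬rQ'.Nil := by
          intro hn; rw [Walk.nil_iff_length_eq] at hn; omega
        have hmem : a ∈ rQ'.support.tail := end_mem_support_tail rQ' hrnil
        have hnd : rQ'.support.Nodup := by rw [← hQ'tail]; exact hQ'tnodup
        rw [Walk.support_eq_cons rQ'] at hnd
        exact absurd hmem (hEq ▸ (List.nodup_cons.mp hnd).1)
      have hvQnotQ' : vQ ∉ Q'.support := by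
        rw [Walk.support_eq_cons Q']
        intro hmem
        rcases List.mem_cons.mp hmem with h | h
        · exact hvQb h
        · exact hdisj hvQQt h
      have hvQ'notQ : vQ' ∉ Q.support := by
        rw [Walk.support_eq_cons Q]
        intro hmem
        rcases List.mem_cons.mp hmem with h | h
        · exact hvQ'a h
        · exact hdisj.symm hvQ'Q't h
      have hvQAtt : vQ ∈ Att := hATT _ (hQsub _ (List.mem_of_mem_tail hvQQt))
      have hvQ'Att : vQ' ∈ Att := hATT _ (hQ'sub _ (List.mem_of_mem_tail hvQ'Q't))
      -- the walk through D from b to a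
      obtain ⟨δa, hδaD, hδa_adj⟩ := ha.2
      obtain ⟨δb, hδbD, hδb_adj⟩ := hb.2
      obtain ⟨wd, hwd⟩ := hDconn δb δa hδbD hδaD
      set Y : G.Walk b a := Walk.cons hδb_adj.symm (wd.append (Walk.cons hδa_adj Walk.nil))
        with hYdef
      have hYsup : ∀ t ∈ Y.support, t = b ∨ t ∈ D ∨ t = a := by
        intro t ht
        rw [hYdef] at ht
        simp only [Walk.support_cons, List.mem_cons, Walk.mem_support_append_iff] at ht
        rcases ht with rfl | ht | ht
        · exact Or.inl rfl
        · exact Or.inr (Or.inl (hwd _ ht))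
        · simp at ht
          rcases ht with rfl | rfl
          · exact Or.inr (Or.inl hδaD)
          · exact Or.inr (Or.inr rfl)
      have hYlen : Y.length = wd.length + 2 := by
        rw [hYdef]; simp [Walk.length_append]
      have hHsupp : ∀ t, t ∈ w₀.support → t ∉ H := by
        intro t ht hH
        exact hHC t hH ht
      have hDatt : ∀ t, t ∈ D → t ∉ H := hDH
      -- first even closed walk
      have hev1 : Even (Q.length + Y.length) := by
        have := kl vQ' hvQ'Att a (Q.append Y) ?_
        · rwa [Walk.length_append] at this
        · intro t ht
          rw [Walk.mem_support_append_iff] at ht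
          rcases ht with ht | ht
          · exact ⟨hHsupp t (hQsub t ht), fun h => hvQ'notQ (h ▸ ht)⟩
          · rcases hYsup t ht with rfl | htD | rfl
            · exact ⟨hHsupp _ hbS, fun h => hvQ'b h.symm⟩
            · refine ⟨hDatt t htD, fun h => ?_⟩
              subst h
              exact hDC _ htD (hAttC hvQ'Att)
            · exact ⟨hHsupp _ haS, fun h => hvQ'a h.symm⟩
      have hev2 : Even (Q'.length + Y.length) := by
        have := kl vQ hvQAtt b (Q'.append Y.reverse) ?_
        · rw [Walk.length_append, Walk.length_reverse] at this
          exact this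
        · intro t ht
          rw [Walk.mem_support_append_iff] at ht
          rcases ht with ht | ht
          · exact ⟨hHsupp t (hQ'sub t ht), fun h => hvQnotQ' (h ▸ ht)⟩
          · rw [Walk.support_reverse, List.mem_reverse] at ht
            rcases hYsup t ht with rfl | htD | rfl
            · exact ⟨hHsupp _ hbS, fun h => hvQb h.symm⟩
            · refine ⟨hDatt t htD, fun h => ?_⟩
              subst h
              exact hDC _ htD (hAttC hvQAtt)
            · exact ⟨hHsupp _ haS, fun h => hvQa h.symm⟩
      rcases hodd₀ with ⟨k, hk⟩
      rcases hev1 with ⟨m1, hm1⟩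
      rcases hev2 with ⟨m2, hm2⟩
      omega
    have tristep : ∀ a b c : V, a ∈ AttD → b ∈ AttD → c ∈ AttD →
        a ≠ b → a ≠ c → b ≠ c → G.Adj a b → G.Adj b c → G.Adj a c → False := by
      intro a b c ha hb hc hab hac hbc hadjab hadjbc hadjac
      obtain ⟨δa, hδaD, hδa_adj⟩ := ha.2
      obtain ⟨δb, hδbD, hδb_adj⟩ := hb.2
      obtain ⟨δc, hδcD, hδc_adj⟩ := hc.2
      obtain ⟨w1, hw1⟩ := hDconn δa δb hδaD hδbD
      obtain ⟨w2, hw2⟩ := hDconn δb δc hδbD hδcD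
      have haAtt : a ∈ Att := hATT _ ha.1
      have hbAtt : b ∈ Att := hATT _ hb.1
      have hcAtt : c ∈ Att := hATT _ hc.1
      have hnotH : ∀ t, t ∈ w₀.support → t ∉ H := fun t ht hH => hHC t hH ht
      have hsupgen : ∀ (x y : V) (hx : x ∈ w₀.support) (hy : y ∈ w₀.support)
          (δx δy : V) (hδx : δx ∈ D) (hδy : δy ∈ D) (exδ : G.Adj x δx) (eδy : G.Adj δy y)
          (eyx : G.Adj y x) (wD : G.Walk δx δy) (hwD : ∀ t ∈ wD.support, t ∈ D)
          (avoid : V) (hav : avoid ∈ Att) (havx : avoid ≠ x) (havy : avoid ≠ y),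
          Even (wD.length + 3) := by
        intro x y hx hy δx δy hδx hδy exδ eδy eyx wD hwD avoid hav havx havy
        have := kl avoid hav x
          (Walk.cons exδ (wD.append (Walk.cons eδy (Walk.cons eyx Walk.nil)))) ?_
        · simpa [Walk.length_append] using this
        · intro t ht
          simp only [Walk.support_cons, List.mem_cons, Walk.mem_support_append_iff] at ht
          have havC : avoid ∈ Csup := hAttC hav
          rcases ht with rfl | ht | ht
          · exact ⟨hnotH _ hx, fun h => havx h.symm⟩
          · exact ⟨hDH _ (hwD _ ht), fun h => hDC _ (hwD _ (h ▸ ht)) havC⟩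
          · simp at ht
            rcases ht with rfl | rfl | rfl
            · exact ⟨hDH _ hδy, fun h => hDC _ (h ▸ hδy) havC⟩
            · exact ⟨hnotH _ hy, fun h => havy h.symm⟩
            · exact ⟨hnotH _ hx, fun h => havx h.symm⟩
      have hev1 : Even (w1.length + 3) :=
        hsupgen a b ha.1 hb.1 δa δb hδaD hδbD hδa_adj.symm hδb_adj hadjab.symm w1 hw1
          c hcAtt hac.symm hbc.symm
      have hev2 : Even (w2.length + 3) :=
        hsupgen b c hb.1 hc.1 δb δc hδbD hδcD hδb_adj.symm hδc_adj hadjbc.symm w2 hw2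
          a haAtt hab hac
      have hw12 : ∀ t ∈ (w1.append w2).support, t ∈ D := by
        intro t ht
        rw [Walk.mem_support_append_iff] at ht
        rcases ht with ht | ht
        · exact hw1 _ ht
        · exact hw2 _ ht
      have hev3 : Even ((w1.append w2).length + 3) :=
        hsupgen a c ha.1 hc.1 δa δc hδaD hδcD hδa_adj.symm hδc_adj hadjac.symm
          (w1.append w2) hw12 b hbAtt hab.symm hbc
      rw [Walk.length_append] at hev3
      rcases hev1 with ⟨m1, hm1⟩
      rcases hev2 with ⟨m2, hm2⟩
      rcases hev3 with ⟨m3, hm3⟩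
      omega
    obtain ⟨x, y, z, hx, hy, hz, hxy, hxz, hyz⟩ := three_distinct hAttD3
    by_cases hj1 : G.Adj x y
    · by_cases hj2 : G.Adj y z
      · by_cases hj3 : G.Adj x z
        · exact tristep x y z hx hy hz hxy hxz hyz hj1 hj2 hj3
        · exact pairstep x z hx hz hxz hj3
      · exact pairstep y z hy hz hyz hj2
    · exact pairstep x y hx hy hxy hj1
  · -- CASE 2 : some cycle vertex is not an attachment; find a gap
    push_neg at hATT
    obtain ⟨t₀, ht₀supp, ht₀att⟩ := hATT
    obtain ⟨hstar, _, _, hstarAtt, -⟩ := three_distinct hAtt3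
    have hstarS : hstar ∈ w₀.support := hstarAtt.1
    set rot := w₀.rotate hstar hstarS with hrotdef
    have hrc : rot.IsCycle := hcyc₀.rotate hstarS
    have hrotsub : ∀ t ∈ rot.support, t ∈ w₀.support := fun t ht =>
      support_rotate_subset w₀ hstarS ht
    have hrotmem : ∀ t ∈ w₀.support, t ∈ rot.support := fun t ht =>
      mem_rot_support w₀ hstarS hcyc₀.not_nil ht
    obtain ⟨h1, h2, pre, q, post, heq, hh1, hh2, hq2, hgap⟩ :=
      gapfind (P := Att) rot hstarAtt hstarAtt ⟨t₀, hrotmem t₀ ht₀supp, ht₀att⟩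
    have hsupp_decomp : rot.support =
        pre.support ++ (q.support.tail ++ post.support.tail) := by
      rw [heq, Walk.support_append, Walk.tail_support_append]
    have htail_decomp : rot.support.tail =
        pre.support.tail ++ (q.support.tail ++ post.support.tail) := by
      have h := congrArg List.tail hsupp_decomp
      rw [Walk.support_eq_cons pre, List.cons_append, List.tail_cons] at h
      exact h
    have hnodup : (pre.support.tail ++ (q.support.tail ++ post.support.tail)).Nodup := by
      rw [← htail_decomp]; exact hrc.support_nodup
    rw [List.nodup_append] at hnodup
    obtain ⟨hndP1, hndmid, hdisjP1'⟩ := hnodup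
    have hdisjP1 : List.Disjoint pre.support.tail (q.support.tail ++ post.support.tail) :=
      fun a ha hb => hdisjP1' a ha a hb rfl
    rw [List.nodup_append] at hndmid
    obtain ⟨hndQt, hndP2, hdisjQtP2'⟩ := hndmid
    have hdisjQtP2 : List.Disjoint q.support.tail post.support.tail :=
      fun a ha hb => hdisjQtP2' a ha a hb rfl
    have hlen_eq : pre.length + q.length + post.length = w₀.length := by
      have h := congrArg Walk.length heq
      rw [Walk.length_append, Walk.length_append] at h
      have h2 : rot.length = w₀.length := by
        rw [hrotdef, Walk.rotate, Walk.length_append]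
        conv_rhs => rw [← Walk.take_spec w₀ hstarS, Walk.length_append]
        omega
      omega
    have hrot_tail_sub : ∀ x ∈ rot.support.tail, x ∈ w₀.support := fun x hx =>
      hrotsub x (List.mem_of_mem_tail hx)
    have hQt_sub : ∀ x ∈ q.support.tail, x ∈ w₀.support := fun x hx =>
      hrot_tail_sub x
        (by rw [htail_decomp]; exact List.mem_append_right _ (List.mem_append_left _ hx))
    have hP1_sub : ∀ x ∈ pre.support.tail, x ∈ w₀.support := fun x hx =>
      hrot_tail_sub x (by rw [htail_decomp]; exact List.mem_append_left _ hx)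
    have hP2_sub : ∀ x ∈ post.support.tail, x ∈ w₀.support := fun x hx =>
      hrot_tail_sub x
        (by rw [htail_decomp]; exact List.mem_append_right _ (List.mem_append_right _ hx))
    have hprenil_eq : pre.length = 0 → h1 = hstar := by
      intro h0
      have hmem : h1 ∈ pre.support := pre.end_mem_support
      rw [Walk.support_eq_cons pre] at hmem
      have hl : pre.support.tail.length = 0 := by rw [support_tail_length]; omega
      rw [List.length_eq_zero_iff] at hl
      rw [hl] at hmem
      simpa using hmem
    have hpostnil_eq : post.length = 0 → h2 = hstar := by
      intro h0
      have hmem : hstar ∈ post.support := post.end_mem_support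
      rw [Walk.support_eq_cons post] at hmem
      have hl : post.support.tail.length = 0 := by rw [support_tail_length]; omega
      rw [List.length_eq_zero_iff] at hl
      rw [hl] at hmem
      exact (by simpa using hmem : hstar = h2).symm
    have hqnonnil : ¬q.Nil := by
      intro hn; rw [Walk.nil_iff_length_eq] at hn; omega
    have hh2Qt : h2 ∈ q.support.tail := end_mem_support_tail q hqnonnil
    have hne12 : h1 ≠ h2 := by
      intro hEq
      subst hEq
      have hh1Qt' : h1 ∈ q.support.tail := hh2Qt
      have hprenil : pre.length = 0 := by
        by_contra hpl
        have hprenn : ¬pre.Nil := by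
          intro hn; rw [Walk.nil_iff_length_eq] at hn; exact hpl hn
        have hm : h1 ∈ pre.support.tail := end_mem_support_tail pre hprenn
        exact (List.disjoint_left.mp hdisjP1) hm (List.mem_append_left _ hh1Qt')
      have hpostnil : post.length = 0 := by
        by_contra hpl
        have hpostnn : ¬post.Nil := by
          intro hn; rw [Walk.nil_iff_length_eq] at hn; exact hpl hn
        have hmem : hstar ∈ post.support.tail := end_mem_support_tail post hpostnn
        have hstarQt : hstar ∈ q.support.tail := by
          rw [← hprenil_eq hprenil]; exact hh1Qt'
        exact (List.disjoint_left.mp hdisjQtP2) hstarQt hmem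
      have hsub : Att ⊆ {h1} := by
        intro e he
        have heRot : e ∈ rot.support := hrotmem e he.1
        rw [hsupp_decomp] at heRot
        have hP1nil : pre.support.tail = [] := by
          rw [← List.length_eq_zero_iff, support_tail_length]; omega
        have hP2nil : post.support.tail = [] := by
          rw [← List.length_eq_zero_iff, support_tail_length]; omega
        rcases List.mem_append.mp heRot with hpre | hrest
        · rw [Walk.support_eq_cons pre, hP1nil] at hpre
          simp only [List.mem_singleton] at hpre
          simp [hpre, (hprenil_eq hprenil).symm]
        · rcases List.mem_append.mp hrest with hq' | hpost
          · by_contra hne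
            simp only [Set.mem_singleton_iff] at hne
            exact hgap e (List.mem_of_mem_tail hq') hne hne he
          · rw [hP2nil] at hpost
            simp at hpost
      have hle := Set.ncard_le_ncard hsub (Set.toFinite _)
      simp [Set.ncard_singleton] at hle
      omega
    have hh1Qt : h1 ∉ q.support.tail := by
      intro hmem
      by_cases hpl : pre.length = 0
      · have hh1star : h1 = hstar := hprenil_eq hpl
        by_cases hpo : post.length = 0
        · exact hne12 (hh1star.trans (hpostnil_eq hpo).symm)
        · have hpostnn : ¬post.Nil := by
            intro hn; rw [Walk.nil_iff_length_eq] at hn; exact hpo hn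
          have h2' : hstar ∈ post.support.tail := end_mem_support_tail post hpostnn
          exact (List.disjoint_left.mp hdisjQtP2) (hh1star ▸ hmem) h2'
      · have hprenn : ¬pre.Nil := by
          intro hn; rw [Walk.nil_iff_length_eq] at hn; exact hpl hn
        have hm : h1 ∈ pre.support.tail := end_mem_support_tail pre hprenn
        exact (List.disjoint_left.mp hdisjP1) hm (List.mem_append_left _ hmem)
    have hfF : ∀ e ∈ Att, e ≠ h1 → e ≠ h2 →
        e ∈ post.support.tail ++ pre.support.tail := by
      intro e he heh1 heh2
      have heRot : e ∈ rot.support := hrotmem e he.1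
      rw [hsupp_decomp] at heRot
      rcases List.mem_append.mp heRot with hpre | hrest
      · rw [Walk.support_eq_cons pre] at hpre
        rcases List.mem_cons.mp hpre with rfl | hpre'
        · have hstarTail : e ∈ rot.support.tail :=
            end_mem_support_tail rot hrc.not_nil
          rw [htail_decomp] at hstarTail
          rcases List.mem_append.mp hstarTail with h | h
          · exact List.mem_append_right _ h
          · rcases List.mem_append.mp h with h' | h'
            · exact absurd he (hgap e (List.mem_of_mem_tail h') heh1 heh2)
            · exact List.mem_append_left _ h'
        · exact List.mem_append_right _ hpre'
      · rcases List.mem_append.mp hrest with hq' | hpost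
        · exact absurd he (hgap e (List.mem_of_mem_tail hq') heh1 heh2)
        · exact List.mem_append_left _ hpost
    obtain ⟨e3, he3Att, he3h1, he3h2⟩ := exists_third hAtt3 h1 h2
    have he3mem : e3 ∈ post.support.tail ++ pre.support.tail := hfF e3 he3Att he3h1 he3h2
    set Q' : G.Walk h2 h1 := post.append pre with hQ'def
    have hQ'tail : Q'.support.tail = post.support.tail ++ pre.support.tail := by
      rw [hQ'def, Walk.tail_support_append]
    have hQ'tail_nodup : Q'.support.tail.Nodup := by
      rw [hQ'tail, List.nodup_append]
      refine ⟨hndP2, hndP1, ?_⟩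
      intro a ha b hb hab; subst hab; exact (List.disjoint_left.mp hdisjP1) hb
        (List.mem_append_right _ ha)
    have hh2Q't : h2 ∉ Q'.support.tail := by
      rw [hQ'tail]
      intro hmem
      rcases List.mem_append.mp hmem with h | h
      · exact (List.disjoint_left.mp hdisjQtP2) hh2Qt h
      · exact (List.disjoint_left.mp hdisjP1) h (List.mem_append_left _ hh2Qt)
    have hQ'len : q.length + Q'.length = w₀.length := by
      rw [hQ'def, Walk.length_append]
      omega
    have hQ'2 : 2 ≤ Q'.length := by
      have htl : Q'.support.tail.length = Q'.length := support_tail_length Q'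
      have he3' : e3 ∈ Q'.support.tail := by rw [hQ'tail]; exact he3mem
      have hpos : 1 ≤ Q'.length := by
        by_contra h
        have h0 : Q'.support.tail.length = 0 := by omega
        rw [List.length_eq_zero_iff] at h0
        rw [h0] at he3'
        simp at he3'
      rcases Nat.lt_or_ge Q'.length 2 with h | h
      · exfalso
        have hl1 : Q'.length = 1 := by omega
        have hQ'nn : ¬Q'.Nil := by
          intro hn; rw [Walk.nil_iff_length_eq] at hn; omega
        have hh1mem : h1 ∈ Q'.support.tail := end_mem_support_tail Q' hQ'nn
        have hlen1 : Q'.support.tail.length = 1 := by omega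
        obtain ⟨a0, ha0⟩ := List.length_eq_one_iff.mp hlen1
        rw [ha0] at he3' hh1mem
        simp only [List.mem_singleton] at he3' hh1mem
        exact he3h1 (he3'.trans hh1mem.symm)
      · exact h
    obtain ⟨vQ, eQ, rq, hQeq⟩ := second_vertex q (by omega)
    obtain ⟨q2, eQ', rq', hQ'eq⟩ := second_vertex Q' (by omega)
    have hrqsupp : rq.support = q.support.tail := by rw [hQeq]; simp
    have hrq'supp : rq'.support = Q'.support.tail := by rw [hQ'eq]; simp
    have hlq : q.length = rq.length + 1 := by rw [hQeq]; simp
    have hlQ' : Q'.length = rq'.length + 1 := by rw [hQ'eq]; simp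
    have hvQmem : vQ ∈ q.support.tail := by rw [← hrqsupp]; exact rq.start_mem_support
    have hvQh1 : vQ ≠ h1 := fun h => hh1Qt (h ▸ hvQmem)
    have hvQh2 : vQ ≠ h2 := by
      intro hEq
      have hr1 : 1 ≤ rq.length := by omega
      have hrnil : ¬rq.Nil := by
        intro hn; rw [Walk.nil_iff_length_eq] at hn; omega
      have hmem : h2 ∈ rq.support.tail := end_mem_support_tail rq hrnil
      have hnd : rq.support.Nodup := by rw [hrqsupp]; exact hndQt
      rw [Walk.support_eq_cons rq] at hnd
      exact absurd hmem (hEq ▸ (List.nodup_cons.mp hnd).1)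
    have hq2mem : q2 ∈ Q'.support.tail := by rw [← hrq'supp]; exact rq'.start_mem_support
    have hq2h2 : q2 ≠ h2 := fun h => hh2Q't (h ▸ hq2mem)
    have hq2h1 : q2 ≠ h1 := by
      intro hEq
      have hr1 : 1 ≤ rq'.length := by omega
      have hrnil : ¬rq'.Nil := by
        intro hn; rw [Walk.nil_iff_length_eq] at hn; omega
      have hmem : h1 ∈ rq'.support.tail := end_mem_support_tail rq' hrnil
      have hnd : rq'.support.Nodup := by rw [hrq'supp]; exact hQ'tail_nodup
      rw [Walk.support_eq_cons rq'] at hnd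
      exact absurd hmem (hEq ▸ (List.nodup_cons.mp hnd).1)
    have hrq_sub : ∀ x ∈ rq.support, x ∈ w₀.support := by
      rw [hrqsupp]; exact hQt_sub
    have hrq'_sub : ∀ x ∈ rq'.support, x ∈ w₀.support := by
      rw [hrq'supp, hQ'tail]
      intro x hx
      rcases List.mem_append.mp hx with h | h
      · exact hP2_sub x h
      · exact hP1_sub x h
    have hrq_h1 : h1 ∉ rq.support := by rw [hrqsupp]; exact hh1Qt
    have hrq'_h2 : h2 ∉ rq'.support := by rw [hrq'supp]; exact hh2Q't
    have hnotH : ∀ t, t ∈ w₀.support → t ∉ H := fun t ht hH => hHC t hH ht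
    set K : Set V := {t | t ∉ H ∧ t ≠ h1 ∧ t ≠ h2} with hKdef
    have hvQK : vQ ∈ K := ⟨hnotH _ (hQt_sub _ hvQmem), hvQh1, hvQh2⟩
    have hq2K : q2 ∈ K :=
      ⟨hnotH _ (hrq'_sub _ rq'.start_mem_support), hq2h1, hq2h2⟩
    by_cases hKconn : ConnOn G K vQ q2
    · -- 2a : the two second-vertices are connected within K
      obtain ⟨R, hR⟩ := hKconn
      have hev1 : Even (rq.length + (R.length + 1)) := by
        have h := kl h1 hh1 vQ (rq.append (Walk.cons eQ' R.reverse)) ?_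
        · rwa [Walk.length_append, Walk.length_cons, Walk.length_reverse] at h
        · intro t ht
          rw [Walk.mem_support_append_iff] at ht
          rcases ht with ht | ht
          · exact ⟨hnotH _ (hrq_sub _ ht), fun h' => hrq_h1 (h' ▸ ht)⟩
          · rcases List.mem_cons.mp (by simpa using ht) with rfl | ht'
            · exact ⟨hnotH _ hh2.1, hne12.symm⟩
            · have ht'' : t ∈ R.support := by simpa using ht'
              exact ⟨(hR t ht'').1, (hR t ht'').2.1⟩
      have hev2 : Even (rq'.length + (R.length + 1)) := by
        have h := kl h2 hh2 q2 (rq'.append (Walk.cons eQ R)) ?_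
        · rwa [Walk.length_append, Walk.length_cons] at h
        · intro t ht
          rw [Walk.mem_support_append_iff] at ht
          rcases ht with ht | ht
          · exact ⟨hnotH _ (hrq'_sub _ ht), fun h' => hrq'_h2 (h' ▸ ht)⟩
          · rcases List.mem_cons.mp (by simpa using ht) with rfl | ht'
            · exact ⟨hnotH _ hh1.1, hne12⟩
            · exact ⟨(hR t ht').1, (hR t ht').2.2⟩
      rcases hodd₀ with ⟨k, hk⟩
      rcases hev1 with ⟨m1, hm1⟩
      rcases hev2 with ⟨m2, hm2⟩
      omega
    · -- 2b : they are not connected within K; find a separated piece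
      have hAttK : ∀ h' ∈ Att, h' ≠ h1 → h' ≠ h2 → ConnOn G K q2 h' := by
        intro h' hh' h'1 h'2
        have hmem : h' ∈ rq'.support := by
          rw [hrq'supp, hQ'tail]; exact hfF h' hh' h'1 h'2
        have hsplit : (rq'.takeUntil h' hmem).append (rq'.dropUntil h' hmem) = rq' :=
          rq'.take_spec hmem
        have hsupp_eq : rq'.support =
            (rq'.takeUntil h' hmem).support ++ (rq'.dropUntil h' hmem).support.tail := by
          conv_lhs => rw [← hsplit]
          rw [Walk.support_append]
        have hnd : rq'.support.Nodup := by rw [hrq'supp]; exact hQ'tail_nodup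
        have hd1 : 1 ≤ (rq'.dropUntil h' hmem).length :=
          pos_length_of_ne _ h'1
        have hdropnn : ¬(rq'.dropUntil h' hmem).Nil := by
          intro hn; rw [Walk.nil_iff_length_eq] at hn; omega
        have hh1drop : h1 ∈ (rq'.dropUntil h' hmem).support.tail :=
          end_mem_support_tail _ hdropnn
        have hh1tk : h1 ∉ (rq'.takeUntil h' hmem).support := by
          intro hmem'
          rw [hsupp_eq, List.nodup_append] at hnd
          exact hnd.2.2 _ hmem' _ hh1drop rfl
        refine ⟨rq'.takeUntil h' hmem, fun x hx => ?_⟩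
        have hxrq' : x ∈ rq'.support := by
          rw [hsupp_eq]; exact List.mem_append_left _ hx
        exact ⟨hnotH _ (hrq'_sub _ hxrq'), fun h => hh1tk (h ▸ hx),
          fun h => hrq'_h2 (h ▸ hxrq')⟩
      have hK3 : ConnOn G K q2 e3 := hAttK e3 he3Att he3h1 he3h2
      have hbsel : ∃ b₀, b₀ ∈ K ∧ ¬ConnOn G K b₀ e3 := by
        by_cases hvQ3 : ConnOn G K vQ e3
        · exact ⟨q2, hq2K, fun hc => hKconn (hvQ3.trans hc.symm)⟩
        · exact ⟨vQ, hvQK, hvQ3⟩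
      obtain ⟨b₀, hb₀K, hb₀n⟩ := hbsel
      have hsnotB : ¬ConnOn G K b₀ s := fun h => h.right_mem.1 hsH
      have hpair2 : ({h1, h2} : Set V).ncard < 3 := by
        rw [Set.ncard_pair hne12]; omega
      have hcc := hconn3 {h1, h2} hpair2
      rw [coe_connected_iff] at hcc
      have hb₀mem : b₀ ∈ Set.univ \ ({h1, h2} : Set V) := by
        refine ⟨trivial, ?_⟩
        simp only [Set.mem_insert_iff, Set.mem_singleton_iff]
        push_neg
        exact ⟨hb₀K.2.1, hb₀K.2.2⟩
      have hsmem : s ∈ Set.univ \ ({h1, h2} : Set V) := by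
        refine ⟨trivial, ?_⟩
        simp only [Set.mem_insert_iff, Set.mem_singleton_iff]
        push_neg
        constructor
        · intro h; exact hs₀ (h ▸ hh1.1)
        · intro h; exact hs₀ (h ▸ hh2.1)
      obtain ⟨w, hw⟩ := hcc.2 b₀ s hb₀mem hsmem
      obtain ⟨u, z, huB, hzB, hadj, hzsupp⟩ :=
        exists_exit (G := G) (B := {t | ConnOn G K b₀ t}) w (ConnOn.refl hb₀K) hsnotB
      have hzd := hw z hzsupp
      have hz1 : z ≠ h1 := by
        intro h; exact hzd.2 (by simp [h])
      have hz2 : z ≠ h2 := by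
        intro h; exact hzd.2 (by simp [h])
      by_cases hzH : z ∈ H
      · have huB' : ConnOn G K b₀ u := huB
        have huK : u ∈ K := huB'.right_mem
        have huAtt : u ∈ Att := att_in u huK.1 z hzH hadj.symm
        exact hb₀n ((huB'.trans ((hAttK u huAtt huK.2.1 huK.2.2).symm)).trans hK3)
      · exact hzB (huB.adj_right hadj ⟨hzH, hz1, hz2⟩)



end NSOC

/-- If `s` is a vertex of a 3-connected graph `G` such that `G - s`
is non-bipartite, then `G` has a non-separating induced odd cycle avoiding `s`. -/
theorem nonseparating_induced_odd_cycle {V : Type*} [Fintype V] (G : SimpleGraph V)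
    (h3 : IsKConnected 3 G) (s : V)
    (hs : HasOddCycle ((⊤ : G.Subgraph).deleteVerts {s}).coe) :
    ∃ (v : V) (w : G.Walk v v), w.IsCycle ∧ Odd w.length ∧
      w.toSubgraph.IsInduced ∧ s ∉ w.toSubgraph.verts ∧
      ((⊤ : G.Subgraph).deleteVerts w.toSubgraph.verts).coe.Connected := by
  classical
  obtain ⟨v₁, c₁, hc₁, hodd₁⟩ := hs
  have hinj : Function.Injective ((⊤ : G.Subgraph).deleteVerts {s}).hom :=
    Subgraph.hom_injective
  have hcyc1 : (c₁.map _).IsCycle := (Walk.map_isCycle_iff_of_injective hinj).mpr hc₁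
  have hoddm : Odd (c₁.map ((⊤ : G.Subgraph).deleteVerts {s}).hom).length := by
    rwa [Walk.length_map]
  have hsnot : s ∉ (c₁.map ((⊤ : G.Subgraph).deleteVerts {s}).hom).support := by
    rw [Walk.support_map]
    intro hmem
    obtain ⟨a, _, ha2⟩ := List.mem_map.mp hmem
    have h2 : (a : V) ∈ Set.univ \ {s} := by
      simpa [Subgraph.deleteVerts_verts] using a.2
    exact h2.2 (by simpa using ha2)
  have hcand : ∃ m l, NSOC.Cand G s m l :=
    ⟨_, _, _, c₁.map _, hcyc1, hoddm, hsnot, rfl, rfl⟩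
  have hbdd : BddAbove {m | ∃ l, NSOC.Cand G s m l} := by
    refine ⟨(Set.univ : Set V).ncard, ?_⟩
    rintro m ⟨l, v, w, -, -, -, hm, -⟩
    rw [← hm]
    exact Set.ncard_le_ncard (Set.subset_univ _) Set.finite_univ
  obtain ⟨m₁, l₁, hml⟩ := hcand
  set M := sSup {m | ∃ l, NSOC.Cand G s m l} with hM
  have hMmem : M ∈ {m | ∃ l, NSOC.Cand G s m l} := Nat.sSup_mem ⟨m₁, l₁, hml⟩ hbdd
  obtain ⟨l₂, hl₂⟩ := hMmem
  set L := sInf {l | NSOC.Cand G s M l} with hL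
  have hLmem : L ∈ {l | NSOC.Cand G s M l} := Nat.sInf_mem ⟨l₂, hl₂⟩
  have hmax : ∀ m l, NSOC.Cand G s m l → m ≤ M := fun m l hc => le_csSup hbdd ⟨l, hc⟩
  have hmin : ∀ l, NSOC.Cand G s M l → L ≤ l := fun l hc => Nat.sInf_le hc
  obtain ⟨v₀, w₀, hcyc₀, hodd₀, hs₀, hH₀, hlen₀⟩ := hLmem
  set Csup : Set V := {y | y ∈ w₀.support} with hCsup
  set S₀ : Set V := Set.univ \ Csup with hS₀
  set H : Set V := {x | NSOC.ConnOn G S₀ s x} with hHdef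
  have hsS₀ : s ∈ S₀ := ⟨trivial, hs₀⟩
  have hsH : s ∈ H := NSOC.ConnOn.refl hsS₀
  have hHS₀ : H ⊆ S₀ := fun z hz => hz.right_mem
  have hHwalk : ∀ z ∈ H, NSOC.ConnOn G H s z := fun z hz => hz.within
  -- Key improvement principle
  have keyimp : ∀ h : V, h ∉ H → (∃ u, u ∈ H ∧ G.Adj u h) →
      ∀ (x : V) (c : G.Walk x x), c.IsCycle → Odd c.length →
      (∀ y ∈ c.support, y ∉ H ∧ y ≠ h) → False := by
    intro h hhH ⟨u, huH, huadj⟩ x c hc hcodd hcs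
    have hsc : s ∉ c.support := fun hx => (hcs s hx).1 hsH
    have hsubH : H ⊆ Set.univ \ {y | y ∈ c.support} :=
      fun z hz => ⟨trivial, fun hzc => (hcs z hzc).1 hz⟩
    have hHin : ∀ z ∈ H, NSOC.ConnOn G (Set.univ \ {y | y ∈ c.support}) s z :=
      fun z hz => (hHwalk z hz).mono hsubH
    have hins : insert h H ⊆ {x | NSOC.ConnOn G (Set.univ \ {y | y ∈ c.support}) s x} := by
      rintro z (rfl | hz)
      · exact (hHin u huH).adj_right huadj ⟨trivial, fun hzc => (hcs z hzc).2 rfl⟩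
      · exact hHin z hz
    have h1 : (insert h H).ncard ≤ M :=
      le_trans (Set.ncard_le_ncard hins (Set.toFinite _)) (hmax _ _ ⟨x, c, hc, hcodd, hsc, rfl, rfl⟩)
    rw [Set.ncard_insert_of_notMem hhH (Set.toFinite _)] at h1
    omega
  -- Inducedness
  have hInd : ∀ u v, u ∈ w₀.support → v ∈ w₀.support → G.Adj u v → s(u, v) ∈ w₀.edges := by
    intro u v hu hv hadj
    by_contra hne
    obtain ⟨x, c, hc, hcodd, hlt, hsub⟩ := NSOC.chord_improve hcyc₀ hodd₀ hu hv hadj hne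
    have hsc : s ∉ c.support := fun h => hs₀ (hsub _ h)
    have hsubset : H ⊆ {x | NSOC.ConnOn G (Set.univ \ {y | y ∈ c.support}) s x} := by
      intro z hz
      refine (hHwalk z hz).mono (fun t ht => ?_)
      exact ⟨trivial, fun htc => (hHS₀ ht).2 (hsub _ htc)⟩
    have hge : M ≤ ({x | NSOC.ConnOn G (Set.univ \ {y | y ∈ c.support}) s x}).ncard := by
      rw [← hH₀]
      exact Set.ncard_le_ncard hsubset (Set.toFinite _)
    have hle := hmax _ _ ⟨x, c, hc, hcodd, hsc, rfl, rfl⟩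
    have heq : ({x | NSOC.ConnOn G (Set.univ \ {y | y ∈ c.support}) s x}).ncard = M := le_antisymm hle hge
    have := hmin c.length ⟨x, c, hc, hcodd, hsc, heq, rfl⟩
    omega
  -- reduce to: everything outside the cycle is in H
  suffices hall : ∀ x ∈ S₀, x ∈ H by
    refine ⟨v₀, w₀, hcyc₀, hodd₀, ?_, ?_, ?_⟩
    · intro a ha b hb hadj
      rw [Walk.mem_verts_toSubgraph] at ha hb
      have hmem := hInd a b ha hb hadj
      rw [← Subgraph.mem_edgeSet, Walk.mem_edges_toSubgraph]
      exact hmem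
    · rw [Walk.verts_toSubgraph]
      exact hs₀
    · rw [Walk.verts_toSubgraph, NSOC.coe_connected_iff]
      refine ⟨⟨s, hsS₀⟩, fun a b ha hb => ?_⟩
      exact ((hall a ha).symm).trans (hall b hb)
  by_contra hno
  push_neg at hno
  obtain ⟨d, hdS₀, hdH⟩ := hno
  exact NSOC.core s d hcyc₀ hodd₀ hs₀ h3.2 hInd keyimp hdS₀.2 hdH
end

section
/- Let G be a 2-connected graph with a 2-cut {x,y} splitting G into G_1 and G_2 (G = G_1 ∪ G_2, V(G_1) ∩ V(G_2) = {x,y}), and suppose G_1 contains a ≥ 1 even and b ≥ 1 odd (x,y)-paths, and G_2 contains c ≥ 1 even and d ≥ 1 odd (x,y)-paths. Then the number of odd cycles in G is at least (number of odd cycles in G_1) + (number of odd cycles in G_2) + ad + bc, and ad + bc ≥ a + d - 1 whenever a,b,c,d ≥ 1. -/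
open SimpleGraph

section Aux

open SimpleGraph Walk

variable {V : Type*}

/-- Odd-cycle edge-set collection. -/
private lemma oddCycleCount_eq (G : SimpleGraph V) :
    oddCycleCount G = {s : Set (Sym2 V) | Odd s.ncard ∧
      ∃ (v : V) (w : G.Walk v v), w.IsCycle ∧ s = {e | e ∈ w.edges}}.ncard := rfl

private lemma aux_ncard_prod {α β : Type*} (s : Set α) (t : Set β) :
    (s ×ˢ t).ncard = s.ncard * t.ncard := by
  rw [← Nat.card_coe_set_eq, ← Nat.card_coe_set_eq, ← Nat.card_coe_set_eq,
    Nat.card_congr (Equiv.Set.prod s t), Nat.card_prod]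

private lemma aux_support_mem_verts {G : SimpleGraph V} {H : G.Subgraph} :
    ∀ {u v : V} (w : H.spanningCoe.Walk u v), v ∈ H.verts →
      ∀ z ∈ w.support, z ∈ H.verts := by
  intro u v w
  induction w with
  | nil => intro hv z hz; simp only [Walk.support_nil, List.mem_singleton] at hz; subst hz; exact hv
  | cons h p ih =>
    intro hv z hz
    rw [Walk.support_cons] at hz
    rcases List.mem_cons.1 hz with rfl | hz
    · exact H.edge_vert h
    · exact ih hv z hz

private lemma aux_edges_mem_edgeSet {G : SimpleGraph V} {H : G.Subgraph} {u v : V}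
    (w : H.spanningCoe.Walk u v) : ∀ e ∈ w.edges, e ∈ H.edgeSet := by
  intro e he
  have := w.edges_subset_edgeSet he
  induction e with
  | h a b => exact (SimpleGraph.mem_edgeSet _).1 this

private lemma aux_ncard_edges {G : SimpleGraph V} {u v : V} {w : G.Walk u v}
    (h : w.edges.Nodup) : {e | e ∈ w.edges}.ncard = w.length := by
  classical
  have : {e | e ∈ w.edges} = ↑w.edges.toFinset := by ext e; simp
  rw [this, Set.ncard_coe_finset, List.toFinset_card_of_nodup h, Walk.length_edges]

private lemma aux_edges_mapLe {G G' : SimpleGraph V} (h : G ≤ G') {u v : V}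
    (w : G.Walk u v) : (w.mapLe h).edges = w.edges := by
  induction w with
  | nil => rfl
  | cons ha p ih =>
    simp only [Walk.mapLe] at ih ⊢
    simp only [Walk.map_cons, Walk.edges_cons, ih]
    rfl

private lemma aux_support_mapLe {G G' : SimpleGraph V} (h : G ≤ G') {u v : V}
    (w : G.Walk u v) : (w.mapLe h).support = w.support := by
  induction w with
  | nil => rfl
  | cons ha p ih =>
    simp only [Walk.mapLe] at ih ⊢
    simp only [Walk.map_cons, Walk.support_cons, ih]

private lemma aux_append_isCycle {G : SimpleGraph V} {x y : V} (hxy : x ≠ y)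
    {p : G.Walk x y} {q : G.Walk y x} (hp : p.IsPath) (hq : q.IsPath)
    (hsup : ∀ z, z ∈ p.support → z ∈ q.support → z = x ∨ z = y)
    (hedge : ∀ e, e ∈ p.edges → e ∈ q.edges → False) :
    (p.append q).IsCycle := by
  refine ⟨⟨⟨?_⟩, ?_⟩, ?_⟩
  · rw [Walk.edges_append, List.nodup_append]
    exact ⟨hp.isTrail.edges_nodup, hq.isTrail.edges_nodup, fun e he1 e' he2 hee => hedge e he1 (hee ▸ he2)⟩
  · intro h
    have hl : p.length + q.length = 0 := by
      simpa [Walk.length_append] using congrArg Walk.length h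
    exact hxy (Walk.eq_of_length_eq_zero (Nat.eq_zero_of_add_eq_zero_right hl))
  · rw [Walk.tail_support_append, List.nodup_append]
    refine ⟨hp.support_nodup.tail, hq.support_nodup.tail, ?_⟩
    intro z hz1 z' hz2 hzz
    subst hzz
    have hz1' : z ∈ p.support := List.mem_of_mem_tail hz1
    have hz2' : z ∈ q.support := List.mem_of_mem_tail hz2
    rcases hsup z hz1' hz2' with rfl | rfl
    · have := hp.support_nodup
      rw [p.support_eq_cons] at this
      exact (List.nodup_cons.1 this).1 hz1
    · have := hq.support_nodup
      rw [q.support_eq_cons] at this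
      exact (List.nodup_cons.1 this).1 hz2

end Aux

/-- If a 2-connected graph `G` is split by a 2-cut `{x, y}` into
`G₁` and `G₂`, where `G₁` has `a ≥ 1` even and `b ≥ 1` odd `(x,y)`-paths and `G₂`
has `c ≥ 1` even and `d ≥ 1` odd `(x,y)`-paths, then `G` has at least
`(#odd cycles of G₁) + (#odd cycles of G₂) + ad + bc` odd cycles, and
`ad + bc ≥ a + d - 1`. -/
theorem two_cut_odd_cycle_count {V : Type*} [Fintype V] (G : SimpleGraph V)
    (h2 : IsKConnected 2 G) (x y : V) (hxy : x ≠ y) (hadj : ¬ G.Adj x y)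
    (G1 G2 : G.Subgraph) (hunion : G1 ⊔ G2 = ⊤)
    (hinter : G1.verts ∩ G2.verts = {x, y})
    (a b c d : ℕ)
    (ha : a = evenPathCount G1.spanningCoe x y) (hb : b = oddPathCount G1.spanningCoe x y)
    (hc : c = evenPathCount G2.spanningCoe x y) (hd : d = oddPathCount G2.spanningCoe x y)
    (ha1 : 1 ≤ a) (hb1 : 1 ≤ b) (hc1 : 1 ≤ c) (hd1 : 1 ≤ d) :
    oddCycleCount G1.spanningCoe + oddCycleCount G2.spanningCoe + a * d + b * c
        ≤ oddCycleCount G ∧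
      a + d - 1 ≤ a * d + b * c := by
  classical
  -- abbreviations
  have le1 : G1.spanningCoe ≤ G := G1.spanningCoe_le
  have le2 : G2.spanningCoe ≤ G := G2.spanningCoe_le
  have hx1 : x ∈ G1.verts ∧ x ∈ G2.verts := by
    have : x ∈ G1.verts ∩ G2.verts := by rw [hinter]; simp
    exact this
  have hy1 : y ∈ G1.verts ∧ y ∈ G2.verts := by
    have : y ∈ G1.verts ∩ G2.verts := by rw [hinter]; simp
    exact this
  -- edges of G1 and G2 are disjoint
  have hE : Disjoint G1.edgeSet G2.edgeSet := by
    rw [Set.disjoint_left]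
    intro e he1 he2
    induction e with
    | h u v =>
      rw [SimpleGraph.Subgraph.mem_edgeSet] at he1 he2
      have hu : u ∈ ({x, y} : Set V) := by
        rw [← hinter]; exact ⟨G1.edge_vert he1, G2.edge_vert he2⟩
      have hv : v ∈ ({x, y} : Set V) := by
        rw [← hinter]; exact ⟨G1.edge_vert he1.symm, G2.edge_vert he2.symm⟩
      have hG : G.Adj u v := he1.adj_sub
      rcases hu with rfl | rfl <;> rcases hv with rfl | rfl
      · exact hG.ne rfl
      · exact hadj hG
      · exact hadj hG.symm
      · exact hG.ne rfl
  -- named sets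
  set E1 := G1.edgeSet with hE1def
  set E2 := G2.edgeSet with hE2def
  set P1e := {s : Set (Sym2 V) | ∃ w : G1.spanningCoe.Walk x y, w.IsPath ∧ Even w.length ∧
    s = {e | e ∈ w.edges}} with hP1e
  set P1o := {s : Set (Sym2 V) | ∃ w : G1.spanningCoe.Walk x y, w.IsPath ∧ Odd w.length ∧
    s = {e | e ∈ w.edges}} with hP1o
  set P2e := {s : Set (Sym2 V) | ∃ w : G2.spanningCoe.Walk x y, w.IsPath ∧ Even w.length ∧
    s = {e | e ∈ w.edges}} with hP2e
  set P2o := {s : Set (Sym2 V) | ∃ w : G2.spanningCoe.Walk x y, w.IsPath ∧ Odd w.length ∧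
    s = {e | e ∈ w.edges}} with hP2o
  set C1 := {s : Set (Sym2 V) | Odd s.ncard ∧
    ∃ (v : V) (w : G1.spanningCoe.Walk v v), w.IsCycle ∧ s = {e | e ∈ w.edges}} with hC1
  set C2 := {s : Set (Sym2 V) | Odd s.ncard ∧
    ∃ (v : V) (w : G2.spanningCoe.Walk v v), w.IsCycle ∧ s = {e | e ∈ w.edges}} with hC2
  set CG := {s : Set (Sym2 V) | Odd s.ncard ∧
    ∃ (v : V) (w : G.Walk v v), w.IsCycle ∧ s = {e | e ∈ w.edges}} with hCG
  set f : Set (Sym2 V) × Set (Sym2 V) → Set (Sym2 V) := fun p => p.1 ∪ p.2 with hf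
  set T1 := f '' (P1e ×ˢ P2o) with hT1
  set T2 := f '' (P1o ×ˢ P2e) with hT2
  -- facts about path edge sets
  have hfact1 : ∀ s ∈ P1e ∪ P1o, s ⊆ E1 ∧ s.Nonempty := by
    rintro s (⟨w, hw, _, rfl⟩ | ⟨w, hw, _, rfl⟩) <;>
    · constructor
      · intro e he; exact aux_edges_mem_edgeSet w e he
      · have hne : w.edges ≠ [] := by
          intro h
          have : w.length = 0 := by
            rw [← Walk.length_edges, h]; rfl
          exact hxy (Walk.eq_of_length_eq_zero this)
        exact ⟨w.edges.head hne, List.head_mem hne⟩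
  have hfact2 : ∀ s ∈ P2e ∪ P2o, s ⊆ E2 ∧ s.Nonempty := by
    rintro s (⟨w, hw, _, rfl⟩ | ⟨w, hw, _, rfl⟩) <;>
    · constructor
      · intro e he; exact aux_edges_mem_edgeSet w e he
      · have hne : w.edges ≠ [] := by
          intro h
          have : w.length = 0 := by
            rw [← Walk.length_edges, h]; rfl
          exact hxy (Walk.eq_of_length_eq_zero this)
        exact ⟨w.edges.head hne, List.head_mem hne⟩
  have hpar1e : ∀ s ∈ P1e, Even s.ncard := by
    rintro s ⟨w, hw, hev, rfl⟩
    rw [aux_ncard_edges hw.isTrail.edges_nodup]; exact hev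
  have hpar1o : ∀ s ∈ P1o, Odd s.ncard := by
    rintro s ⟨w, hw, hod, rfl⟩
    rw [aux_ncard_edges hw.isTrail.edges_nodup]; exact hod
  have hpar2e : ∀ s ∈ P2e, Even s.ncard := by
    rintro s ⟨w, hw, hev, rfl⟩
    rw [aux_ncard_edges hw.isTrail.edges_nodup]; exact hev
  have hpar2o : ∀ s ∈ P2o, Odd s.ncard := by
    rintro s ⟨w, hw, hod, rfl⟩
    rw [aux_ncard_edges hw.isTrail.edges_nodup]; exact hod
  -- decomposition keys
  have key1 : ∀ s1 s2 : Set (Sym2 V), s1 ⊆ E1 → s2 ⊆ E2 → (s1 ∪ s2) ∩ E1 = s1 := by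
    intro s1 s2 h1 h2
    ext e
    constructor
    · rintro ⟨(he | he), heE⟩
      · exact he
      · exact absurd heE (Set.disjoint_right.1 hE (h2 he))
    · intro he; exact ⟨Or.inl he, h1 he⟩
  have key2 : ∀ s1 s2 : Set (Sym2 V), s1 ⊆ E1 → s2 ⊆ E2 → (s1 ∪ s2) ∩ E2 = s2 := by
    intro s1 s2 h1 h2
    ext e
    constructor
    · rintro ⟨(he | he), heE⟩
      · exact absurd heE (Set.disjoint_left.1 hE (h1 he))
      · exact he
    · intro he; exact ⟨Or.inr he, h2 he⟩
  -- facts about odd cycle sets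
  have hcyc1 : ∀ s ∈ C1, s ⊆ E1 ∧ s.Nonempty := by
    rintro s ⟨hodd, v, w, hw, rfl⟩
    refine ⟨fun e he => aux_edges_mem_edgeSet w e he, ?_⟩
    apply Set.nonempty_of_ncard_ne_zero
    intro h; rw [h] at hodd; simp at hodd
  have hcyc2 : ∀ s ∈ C2, s ⊆ E2 ∧ s.Nonempty := by
    rintro s ⟨hodd, v, w, hw, rfl⟩
    refine ⟨fun e he => aux_edges_mem_edgeSet w e he, ?_⟩
    apply Set.nonempty_of_ncard_ne_zero
    intro h; rw [h] at hodd; simp at hodd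
  -- the combined cycle construction
  have hcomb : ∀ (w1 : G1.spanningCoe.Walk x y) (w2 : G2.spanningCoe.Walk x y),
      w1.IsPath → w2.IsPath →
      ∃ (w : G.Walk x x), w.IsCycle ∧
        {e | e ∈ w.edges} = {e | e ∈ w1.edges} ∪ {e | e ∈ w2.edges} := by
    intro w1 w2 hw1 hw2
    set p := w1.mapLe le1 with hp
    set q := (w2.mapLe le2).reverse with hq
    have hps : p.support = w1.support := aux_support_mapLe le1 w1
    have hpe : p.edges = w1.edges := aux_edges_mapLe le1 w1
    have hqs : ∀ z, z ∈ q.support ↔ z ∈ w2.support := by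
      intro z
      rw [hq, Walk.support_reverse, List.mem_reverse, aux_support_mapLe le2 w2]
    have hqe : ∀ e, e ∈ q.edges ↔ e ∈ w2.edges := by
      intro e
      rw [hq, Walk.edges_reverse, List.mem_reverse, aux_edges_mapLe le2 w2]
    refine ⟨p.append q, ?_, ?_⟩
    · apply aux_append_isCycle hxy (hw1.mapLe le1) ((hw2.mapLe le2).reverse)
      · intro z hz1 hz2
        rw [hps] at hz1
        rw [hqs] at hz2
        have h1 : z ∈ G1.verts := aux_support_mem_verts w1 hy1.1 z hz1
        have h2 : z ∈ G2.verts := aux_support_mem_verts w2 hy1.2 z hz2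
        have : z ∈ ({x, y} : Set V) := by rw [← hinter]; exact ⟨h1, h2⟩
        exact this
      · intro e he1 he2
        rw [hpe] at he1
        rw [hqe] at he2
        exact Set.disjoint_left.1 hE (aux_edges_mem_edgeSet w1 e he1)
          (aux_edges_mem_edgeSet w2 e he2)
    · ext e
      simp only [Set.mem_setOf_eq, Walk.edges_append, List.mem_append, Set.mem_union, hpe]
      rw [hqe]
  -- T1 and T2 are subsets of CG, with full membership data
  have hT1sub : T1 ⊆ CG := by
    rintro s ⟨⟨s1, s2⟩, hmem, rfl⟩
    obtain ⟨h1, h2⟩ := hmem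
    obtain ⟨w1, hw1, hev1, hs1⟩ := h1
    obtain ⟨w2, hw2, hod2, hs2⟩ := h2
    obtain ⟨w, hwc, hwe⟩ := hcomb w1 w2 hw1 hw2
    replace hs1 : s1 = {e | e ∈ w1.edges} := hs1
    replace hs2 : s2 = {e | e ∈ w2.edges} := hs2
    show s1 ∪ s2 ∈ CG
    have hdisj : Disjoint s1 s2 :=
      Set.disjoint_of_subset (hfact1 s1 (Or.inl ⟨w1, hw1, hev1, hs1⟩)).1
        (hfact2 s2 (Or.inr ⟨w2, hw2, hod2, hs2⟩)).1 hE
    refine ⟨?_, x, w, hwc, ?_⟩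
    · show Odd (s1 ∪ s2).ncard
      rw [Set.ncard_union_eq hdisj (Set.toFinite _) (Set.toFinite _), hs1, hs2,
        aux_ncard_edges hw1.isTrail.edges_nodup, aux_ncard_edges hw2.isTrail.edges_nodup]
      exact hev1.add_odd hod2
    · show (s1 ∪ s2) = _
      rw [hwe, hs1, hs2]
  have hT2sub : T2 ⊆ CG := by
    rintro s ⟨⟨s1, s2⟩, hmem, rfl⟩
    obtain ⟨h1, h2⟩ := hmem
    obtain ⟨w1, hw1, hod1, hs1⟩ := h1
    obtain ⟨w2, hw2, hev2, hs2⟩ := h2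
    obtain ⟨w, hwc, hwe⟩ := hcomb w1 w2 hw1 hw2
    replace hs1 : s1 = {e | e ∈ w1.edges} := hs1
    replace hs2 : s2 = {e | e ∈ w2.edges} := hs2
    show s1 ∪ s2 ∈ CG
    have hdisj : Disjoint s1 s2 :=
      Set.disjoint_of_subset (hfact1 s1 (Or.inr ⟨w1, hw1, hod1, hs1⟩)).1
        (hfact2 s2 (Or.inl ⟨w2, hw2, hev2, hs2⟩)).1 hE
    refine ⟨?_, x, w, hwc, ?_⟩
    · show Odd (s1 ∪ s2).ncard
      rw [Set.ncard_union_eq hdisj (Set.toFinite _) (Set.toFinite _), hs1, hs2,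
        aux_ncard_edges hw1.isTrail.edges_nodup, aux_ncard_edges hw2.isTrail.edges_nodup]
      rw [add_comm]
      exact hev2.add_odd hod1
    · show (s1 ∪ s2) = _
      rw [hwe, hs1, hs2]
  -- C1 and C2 are subsets of CG
  have hC1sub : C1 ⊆ CG := by
    rintro s ⟨hodd, v, w, hw, rfl⟩
    exact ⟨hodd, v, w.mapLe le1, hw.mapLe le1, by rw [aux_edges_mapLe le1 w]⟩
  have hC2sub : C2 ⊆ CG := by
    rintro s ⟨hodd, v, w, hw, rfl⟩
    exact ⟨hodd, v, w.mapLe le2, hw.mapLe le2, by rw [aux_edges_mapLe le2 w]⟩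
  -- membership extraction for T1 and T2
  have hT1mem : ∀ s ∈ T1, ∃ s1 s2, s1 ∈ P1e ∧ s2 ∈ P2o ∧ s = s1 ∪ s2 := by
    rintro s ⟨⟨s1, s2⟩, ⟨h1, h2⟩, rfl⟩
    exact ⟨s1, s2, h1, h2, rfl⟩
  have hT2mem : ∀ s ∈ T2, ∃ s1 s2, s1 ∈ P1o ∧ s2 ∈ P2e ∧ s = s1 ∪ s2 := by
    rintro s ⟨⟨s1, s2⟩, ⟨h1, h2⟩, rfl⟩
    exact ⟨s1, s2, h1, h2, rfl⟩
  -- T-elements contain an edge of E1 and of E2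
  have hT1E : ∀ s ∈ T1 ∪ T2, (∃ e ∈ s, e ∈ E1) ∧ (∃ e ∈ s, e ∈ E2) := by
    rintro s (hs | hs)
    · obtain ⟨s1, s2, h1, h2, rfl⟩ := hT1mem s hs
      obtain ⟨hs1E, ⟨e1, he1⟩⟩ := hfact1 s1 (Or.inl h1)
      obtain ⟨hs2E, ⟨e2, he2⟩⟩ := hfact2 s2 (Or.inr h2)
      exact ⟨⟨e1, Or.inl he1, hs1E he1⟩, ⟨e2, Or.inr he2, hs2E he2⟩⟩
    · obtain ⟨s1, s2, h1, h2, rfl⟩ := hT2mem s hs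
      obtain ⟨hs1E, ⟨e1, he1⟩⟩ := hfact1 s1 (Or.inr h1)
      obtain ⟨hs2E, ⟨e2, he2⟩⟩ := hfact2 s2 (Or.inl h2)
      exact ⟨⟨e1, Or.inl he1, hs1E he1⟩, ⟨e2, Or.inr he2, hs2E he2⟩⟩
  -- disjointness facts
  have hd12 : Disjoint C1 C2 := by
    rw [Set.disjoint_left]
    intro s h1 h2
    obtain ⟨hsub1, e, he⟩ := hcyc1 s h1
    exact Set.disjoint_left.1 hE (hsub1 he) ((hcyc2 s h2).1 he)
  have hdC1T : Disjoint C1 (T1 ∪ T2) := by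
    rw [Set.disjoint_left]
    intro s h1 h2
    obtain ⟨hsub1, _⟩ := hcyc1 s h1
    obtain ⟨_, e, hes, heE2⟩ := hT1E s h2
    exact Set.disjoint_left.1 hE (hsub1 hes) heE2
  have hdC2T : Disjoint C2 (T1 ∪ T2) := by
    rw [Set.disjoint_left]
    intro s h2 hT
    obtain ⟨hsub2, _⟩ := hcyc2 s h2
    obtain ⟨⟨e, hes, heE1⟩, _⟩ := hT1E s hT
    exact Set.disjoint_left.1 hE heE1 (hsub2 hes)
  have hdT12 : Disjoint T1 T2 := by
    rw [Set.disjoint_left]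
    intro s h1 h2
    obtain ⟨s1, s2, hm1, hm2, rfl⟩ := hT1mem s h1
    obtain ⟨t1, t2, hn1, hn2, heq⟩ := hT2mem _ h2
    have h1E := (hfact1 s1 (Or.inl hm1)).1
    have h2E := (hfact2 s2 (Or.inr hm2)).1
    have h1E' := (hfact1 t1 (Or.inr hn1)).1
    have h2E' := (hfact2 t2 (Or.inl hn2)).1
    have : s1 = t1 := by
      rw [← key1 s1 s2 h1E h2E, ← key1 t1 t2 h1E' h2E', ← heq]
    have hev := hpar1e s1 hm1
    have hod := hpar1o t1 hn1
    rw [this] at hev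
    exact (Nat.not_odd_iff_even.2 hev) hod
  -- cardinalities of T1 and T2
  have hinj1 : Set.InjOn f (P1e ×ˢ P2o) := by
    rintro ⟨s1, s2⟩ ⟨hm1, hm2⟩ ⟨t1, t2⟩ ⟨hn1, hn2⟩ heq
    have h1E := (hfact1 s1 (Or.inl hm1)).1
    have h2E := (hfact2 s2 (Or.inr hm2)).1
    have h1E' := (hfact1 t1 (Or.inl hn1)).1
    have h2E' := (hfact2 t2 (Or.inr hn2)).1
    have heq' : s1 ∪ s2 = t1 ∪ t2 := heq
    have e1 : s1 = t1 := by
      rw [← key1 s1 s2 h1E h2E, ← key1 t1 t2 h1E' h2E', heq']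
    have e2 : s2 = t2 := by
      rw [← key2 s1 s2 h1E h2E, ← key2 t1 t2 h1E' h2E', heq']
    exact Prod.ext e1 e2
  have hinj2 : Set.InjOn f (P1o ×ˢ P2e) := by
    rintro ⟨s1, s2⟩ ⟨hm1, hm2⟩ ⟨t1, t2⟩ ⟨hn1, hn2⟩ heq
    have h1E := (hfact1 s1 (Or.inr hm1)).1
    have h2E := (hfact2 s2 (Or.inl hm2)).1
    have h1E' := (hfact1 t1 (Or.inr hn1)).1
    have h2E' := (hfact2 t2 (Or.inl hn2)).1
    have heq' : s1 ∪ s2 = t1 ∪ t2 := heq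
    have e1 : s1 = t1 := by
      rw [← key1 s1 s2 h1E h2E, ← key1 t1 t2 h1E' h2E', heq']
    have e2 : s2 = t2 := by
      rw [← key2 s1 s2 h1E h2E, ← key2 t1 t2 h1E' h2E', heq']
    exact Prod.ext e1 e2
  have hcardT1 : T1.ncard = a * d := by
    rw [hT1, Set.ncard_image_of_injOn hinj1, aux_ncard_prod, ha, hd]
    rfl
  have hcardT2 : T2.ncard = b * c := by
    rw [hT2, Set.ncard_image_of_injOn hinj2, aux_ncard_prod, hb, hc]
    rfl
  constructor
  · -- main inequality
    have hgoal : oddCycleCount G1.spanningCoe = C1.ncard := rfl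
    have hgoal2 : oddCycleCount G2.spanningCoe = C2.ncard := rfl
    have hgoalG : oddCycleCount G = CG.ncard := rfl
    rw [hgoal, hgoal2, hgoalG, ← hcardT1, ← hcardT2]
    have hsub : C1 ∪ (C2 ∪ (T1 ∪ T2)) ⊆ CG := by
      intro s hs
      rcases hs with hs | hs | hs | hs
      · exact hC1sub hs
      · exact hC2sub hs
      · exact hT1sub hs
      · exact hT2sub hs
    calc C1.ncard + C2.ncard + T1.ncard + T2.ncard
        = (C1 ∪ (C2 ∪ (T1 ∪ T2))).ncard := by
          rw [Set.ncard_union_eq (Set.disjoint_union_right.mpr ⟨hd12, hdC1T⟩)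
              (Set.toFinite _) (Set.toFinite _),
            Set.ncard_union_eq hdC2T (Set.toFinite _) (Set.toFinite _),
            Set.ncard_union_eq hdT12 (Set.toFinite _) (Set.toFinite _)]
          ring
      _ ≤ CG.ncard := Set.ncard_le_ncard hsub (Set.toFinite _)
  · -- arithmetic part
    have h1 : a + d ≤ a * d + 1 := by nlinarith
    have h2 : 1 ≤ b * c := Nat.one_le_iff_ne_zero.2 (Nat.mul_ne_zero
      (Nat.one_le_iff_ne_zero.1 hb1) (Nat.one_le_iff_ne_zero.1 hc1))
    omega
end
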